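/- arXiv:2104.05172 — 8 statements merged into one kernel-verified Lean document; each statement's English description precedes it below -/
import Mathlib

section
/- Let p, k, c, n be positive integers with c ≥ 2, p ≤ k ≤ n, and k/(p·e^c) ≥ 2. Against every adaptive deterministic emptier, the (p,k,c)-filling strategy guarantees: with probability at least k^{−k} over the filler's random choices, after the final step of the strategy at least k/(2e^c) cups each contain at least c/2 units of water. -/
/-!
The filler only needs to be lucky. The emptier touches at most `p` cups per step, so some
admissible deletion set `D` of `p` active cups contains every active cup it touches; if the
random deletions are such sets in all `t` steps, which happens with probability
`∏ᵢ C(k - p i, p)⁻¹ ≥ k^{-k}`, then no surviving cup is ever emptied. Each of the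
`k - p t ≥ k/(2e^c)` survivors then holds `∑ᵢ p/(k - p i) ≥ log ((k + p)/(k + p - p t))`, and
the choice of `t` makes this at least `c - log (5/2) ≥ c/2`.
-/

/-- The `(p,k,c)`-filling strategy against an adaptive deterministic emptier `E`.
The state is (remaining steps, current set `S` of active cups, history of random
deletion sets, current fills).  In each step the filler places `p/|S|` water into every
cup of `S`; the emptier (a deterministic function of the history) removes up to `E hist j`
water from each cup `j` (fills never go below `0`); then `p` distinct cups, chosen
uniformly at random, are deleted from `S` and recorded in the history. -/
noncomputable def pkcGame (n p : ℕ) (E : List (Finset (Fin n)) → Fin n → ℝ) :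
    ℕ → Finset (Fin n) → List (Finset (Fin n)) → (Fin n → ℝ) → PMF (Fin n → ℝ)
  | 0, _, _, g => PMF.pure g
  | steps + 1, S, hist, g =>
    if h : (Finset.powersetCard p S).Nonempty then
      (PMF.uniformOfFinset _ h).bind fun D =>
        pkcGame n p E steps (S \ D) (hist ++ [D])
          (fun j => max ((g j + if j ∈ S then (p : ℝ) / (S.card : ℝ) else 0) - E hist j) 0)
    else
      PMF.pure fun j => max ((g j + if j ∈ S then (p : ℝ) / (S.card : ℝ) else 0) - E hist j) 0

open Finset Real
open scoped ENNReal

section Floor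

variable {α : Type*} [Field α] [LinearOrder α] [IsStrictOrderedRing α] [FloorSemiring α]

theorem sub_two_lt_natFloor_sub_one (x : α) : x - 2 < ((⌊x⌋₊ - 1 : ℕ) : α) := by
  have hfloor : (⌊x⌋₊ : α) ≤ ((⌊x⌋₊ - 1 : ℕ) : α) + 1 := by exact_mod_cast le_tsub_add
  linarith [Nat.lt_floor_add_one x]

theorem natFloor_sub_one_le {x : α} (hx : 1 ≤ x) : ((⌊x⌋₊ - 1 : ℕ) : α) ≤ x - 1 := by
  rw [Nat.cast_sub ((Nat.one_le_floor_iff x).2 hx), Nat.cast_one]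
  linarith [Nat.floor_le (zero_le_one.trans hx)]

end Floor

@[to_additive]
theorem prod_range_succ_sub_step {M : Type*} [CommMonoid M] (f : ℕ → M) (s p m : ℕ) :
    ∏ i ∈ range (m + 1), f (s - p * i) = f s * ∏ i ∈ range m, f (s - p - p * i) := by
  simp only [prod_range_succ', mul_add_one, Nat.sub_sub, add_comm (p * _) p, mul_zero,
    Nat.sub_zero, mul_comm (f s)]

theorem ofReal_inv_pow_self_le_prod_inv_choose {p k t : ℕ} (hk : 1 ≤ k) (hpt : p * t ≤ k) :
    ENNReal.ofReal (1 / (k : ℝ) ^ k) ≤ ∏ i ∈ range t, ((k - p * i).choose p : ℝ≥0∞)⁻¹ :=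
  calc ENNReal.ofReal (1 / (k : ℝ) ^ k) = ((k : ℝ≥0∞) ^ k)⁻¹ := by
        rw [one_div, ENNReal.ofReal_inv_of_pos (by positivity), ENNReal.ofReal_pow (by positivity),
          ENNReal.ofReal_natCast]
    _ ≤ ((k : ℝ≥0∞) ^ (p * t))⁻¹ :=
        ENNReal.inv_le_inv.2 (pow_le_pow_right₀ (by exact_mod_cast hk) hpt)
    _ = ∏ i ∈ range t, ((k : ℝ≥0∞) ^ p)⁻¹ := by
        rw [prod_const, card_range, ENNReal.inv_pow, ENNReal.inv_pow, pow_mul]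
    _ ≤ _ := prod_le_prod' fun i _ => ENNReal.inv_le_inv.2 <| by
        exact_mod_cast (Nat.choose_le_pow _ _).trans (Nat.pow_le_pow_left (Nat.sub_le _ _) _)

theorem log_sub_log_le_sum_div {p k t : ℕ} (hp : 0 < p) (hpt : p * t ≤ k) :
    log (k + p) - log (k + p - p * t) ≤ ∑ i ∈ range t, (p : ℝ) / ((k - p * i : ℕ) : ℝ) := by
  set f : ℕ → ℝ := fun i => log (k + p - p * i)
  have hstep : ∀ i ∈ range t, f i - f (i + 1) ≤ (p : ℝ) / ((k - p * i : ℕ) : ℝ) := by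
    intro i hi
    have hpi : p * i + p ≤ k := (mul_add_one p i).symm.trans_le
      ((Nat.mul_le_mul_left p (mem_range.1 hi)).trans hpt)
    set a : ℝ := ((k - p * i : ℕ) : ℝ)
    have ha : 0 < a := by simp only [a]; exact_mod_cast Nat.sub_pos_of_lt (by omega)
    have hfi : f i = log (a + p) := by
      simp only [f, a]; rw [Nat.cast_sub (by omega)]; push_cast; ring_nf
    have hfi' : f (i + 1) = log a := by
      simp only [f, a]; rw [Nat.cast_sub (by omega)]; push_cast; ring_nf
    rw [hfi, hfi', ← log_div (by positivity) ha.ne']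
    calc log ((a + p) / a) ≤ (a + p) / a - 1 := log_le_sub_one_of_pos (by positivity)
      _ = p / a := by field_simp; ring
  calc log (k + p) - log (k + p - p * t) = ∑ i ∈ range t, (f i - f (i + 1)) := by
        rw [sum_range_sub']; simp [f]
    _ ≤ _ := sum_le_sum hstep

theorem half_le_sum_div {p k c t : ℕ} (hp : 0 < p) (hc : 2 ≤ c) (hpt : p * t ≤ k)
    (hpk : (p : ℝ) ≤ k * exp (-c) / 2) (hlo : k * (1 - exp (-c)) - 2 * p < p * t) :
    (c : ℝ) / 2 ≤ ∑ i ∈ range t, (p : ℝ) / ((k - p * i : ℕ) : ℝ) := by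
  have hp' : (0 : ℝ) < p := by exact_mod_cast hp
  have hk : (0 : ℝ) < k := pos_of_mul_pos_left (by linarith) (exp_pos _).le
  have hpt' : (p : ℝ) * t ≤ k := by exact_mod_cast hpt
  have hlog_rem : log (k + p - p * t) ≤ log (5 / 2) + log k - c :=
    calc log (k + p - p * t) ≤ log (5 / 2 * (k * exp (-c))) :=
          log_le_log (by linarith) (by linarith)
      _ = log (5 / 2) + log k - c := by
        rw [log_mul (by norm_num) (by positivity), log_mul hk.ne' (exp_pos _).ne', log_exp]; ring
  have hlog_k : log k ≤ log (k + p) := log_le_log hk (by linarith)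
  have hlog_five_halves : log (5 / 2 : ℝ) ≤ 1 := by
    rw [log_le_iff_le_exp (by norm_num)]; linarith [exp_one_gt_d9]
  have hc' : (2 : ℝ) ≤ c := by exact_mod_cast hc
  linarith [log_sub_log_le_sum_div hp hpt]

noncomputable def pkcSteps (p k c : ℕ) : ℕ := ⌊(k : ℝ) / p * (1 - exp (-(c : ℝ)))⌋₊ - 1

section Steps

variable {p k c : ℕ}

theorem cast_le_mul_exp_neg_div_two (hp : 0 < p) (hkpc : 2 ≤ (k : ℝ) / (p * exp c)) :
    (p : ℝ) ≤ k * exp (-c) / 2 := by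
  rw [le_div_iff₀ (by positivity)] at hkpc
  rw [exp_neg, ← div_eq_mul_inv, le_div_iff₀ two_pos, le_div_iff₀ (exp_pos _)]
  linarith

theorem sub_two_mul_lt_mul_pkcSteps (hp : 0 < p) :
    k * (1 - exp (-c)) - 2 * p < (p : ℝ) * pkcSteps p k c := by
  have hp' : (0 : ℝ) < p := by exact_mod_cast hp
  calc k * (1 - exp (-c)) - 2 * p = p * ((k : ℝ) / p * (1 - exp (-(c : ℝ))) - 2) := by field_simp
    _ < _ := mul_lt_mul_of_pos_left (sub_two_lt_natFloor_sub_one _) hp'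

theorem mul_pkcSteps_le (hp : 0 < p) (hc : 2 ≤ c) (hpk : (p : ℝ) ≤ k * exp (-c) / 2) :
    (p : ℝ) * pkcSteps p k c ≤ k * (1 - exp (-c)) - p := by
  have hp' : (0 : ℝ) < p := by exact_mod_cast hp
  have hexp : exp (-c) ≤ 1 / 3 := by
    have hc' : (2 : ℝ) ≤ c := by exact_mod_cast hc
    rw [exp_neg, inv_eq_one_div]
    exact one_div_le_one_div_of_le (by norm_num) (by linarith [add_one_le_exp (c : ℝ)])
  have hsteps : 1 ≤ (k : ℝ) / p * (1 - exp (-(c : ℝ))) := by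
    rw [div_mul_eq_mul_div, le_div_iff₀ hp']
    nlinarith [exp_pos (-(c : ℝ))]
  calc (p : ℝ) * pkcSteps p k c ≤ p * ((k : ℝ) / p * (1 - exp (-(c : ℝ))) - 1) :=
        mul_le_mul_of_nonneg_left (natFloor_sub_one_le hsteps) hp'.le
    _ = _ := by field_simp

theorem mul_pkcSteps_le_self (hp : 0 < p) (hc : 2 ≤ c) (hpk : (p : ℝ) ≤ k * exp (-c) / 2) :
    p * pkcSteps p k c ≤ k := by
  have := mul_pkcSteps_le hp hc hpk
  exact_mod_cast (show (p : ℝ) * pkcSteps p k c ≤ k by nlinarith [exp_pos (-(c : ℝ))])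

theorem div_two_mul_exp_le_sub_mul_pkcSteps (hp : 0 < p) (hc : 2 ≤ c)
    (hpk : (p : ℝ) ≤ k * exp (-c) / 2) :
    (k : ℝ) / (2 * exp c) ≤ ((k - p * pkcSteps p k c : ℕ) : ℝ) :=
  calc (k : ℝ) / (2 * exp c) ≤ k * exp (-c) := by
        rw [exp_neg, ← div_eq_mul_inv]
        exact div_le_div_of_nonneg_left (by positivity) (exp_pos _) (by linarith [exp_pos (c : ℝ)])
    _ ≤ ((k - p * pkcSteps p k c : ℕ) : ℝ) := by
        rw [Nat.cast_sub (mul_pkcSteps_le_self hp hc hpk)]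
        push_cast
        linarith [mul_pkcSteps_le hp hc hpk]

end Steps

section Game

variable {n p : ℕ} {E : List (Finset (Fin n)) → Fin n → ℝ}

theorem pkcGame_succ_apply_ge {m : ℕ} {S D : Finset (Fin n)} {hist : List (Finset (Fin n))}
    {g x : Fin n → ℝ} (hD : D ∈ powersetCard p S) :
    ((S.card.choose p : ℝ≥0∞))⁻¹ * pkcGame n p E m (S \ D) (hist ++ [D])
        (fun j => max ((g j + if j ∈ S then (p : ℝ) / S.card else 0) - E hist j) 0) x ≤
      pkcGame n p E (m + 1) S hist g x := by
  have hne : (powersetCard p S).Nonempty := ⟨D, hD⟩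
  rw [pkcGame, dif_pos hne, PMF.bind_apply]
  refine le_trans (le_of_eq ?_) (ENNReal.le_tsum D)
  rw [PMF.uniformOfFinset_apply, if_pos hD, card_powersetCard]

theorem exists_survivors_le_pkcGame_apply (hEp : ∀ hist, Set.ncard {j : Fin n | E hist j ≠ 0} ≤ p)
    (m : ℕ) (S : Finset (Fin n)) (hist : List (Finset (Fin n))) (g : Fin n → ℝ)
    (hm : p * m ≤ S.card) (hg : ∀ j ∈ S, 0 ≤ g j) :
    ∃ T ⊆ S, T.card = S.card - p * m ∧ ∃ x : Fin n → ℝ,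
      (∀ j ∈ T, g j + ∑ i ∈ range m, (p : ℝ) / ((S.card - p * i : ℕ) : ℝ) ≤ x j) ∧
      ∏ i ∈ range m, ((S.card - p * i).choose p : ℝ≥0∞)⁻¹ ≤ pkcGame n p E m S hist g x := by
  induction m generalizing S hist g with
  | zero => exact ⟨S, subset_rfl, by simp, g, by simp, by simp [pkcGame]⟩
  | succ m ih =>
    have hpS : p ≤ S.card := (Nat.le_mul_of_pos_right p m.succ_pos).trans hm
    have hemptied : (S.filter (E hist · ≠ 0)).card ≤ p := by
      rw [← Set.ncard_coe_finset]
      refine (Set.ncard_le_ncard ?_).trans (hEp hist)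
      intro j hj
      exact (mem_filter.1 hj).2
    -- Deleting every active cup the emptier touches leaves the survivors untouched.
    obtain ⟨D, hemptiedD, hDS, hDcard⟩ :=
      exists_subsuperset_card_eq (filter_subset _ S) hemptied hpS
    have hSD : (S \ D).card = S.card - p := by rw [card_sdiff_of_subset hDS, hDcard]
    set g' : Fin n → ℝ := fun j => max ((g j + if j ∈ S then (p : ℝ) / S.card else 0) - E hist j) 0
    have hg' : ∀ j ∈ S \ D, g' j = g j + p / S.card := by
      intro j hj
      obtain ⟨hjS, hjD⟩ := mem_sdiff.1 hj
      have hE : E hist j = 0 := by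
        by_contra hE
        exact hjD (hemptiedD (mem_filter.2 ⟨hjS, hE⟩))
      have := hg j hjS
      simp only [g', hjS, hE, if_true, sub_zero]
      exact max_eq_left (by positivity)
    obtain ⟨T, hTS, hTcard, x, hx, hprob⟩ :=
      ih (S \ D) (hist ++ [D]) g' (by rw [hSD, mul_add_one] at *; omega) fun j _ => le_max_right _ _
    refine ⟨T, hTS.trans sdiff_subset, by rw [hTcard, hSD, mul_add_one]; omega, x,
      fun j hj => ?_, ?_⟩
    · rw [sum_range_succ_sub_step (fun a : ℕ => (p : ℝ) / a)]
      have := hx j hj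
      rw [hg' j (hTS hj), hSD] at this
      linarith
    · rw [prod_range_succ_sub_step (fun a : ℕ => ((a.choose p : ℕ) : ℝ≥0∞)⁻¹), ← hSD]
      exact (mul_le_mul_right hprob _).trans
        (pkcGame_succ_apply_ge (mem_powersetCard.2 ⟨hDS, hDcard⟩))

end Game

theorem stmt_1_general (n p k c : ℕ) (hp : 1 ≤ p) (hc : 2 ≤ c) (hpk : p ≤ k)
    (hkpc : 2 ≤ (k : ℝ) / ((p : ℝ) * Real.exp c))
    (S₁ : Finset (Fin n)) (hS₁ : S₁.card = k)
    (E : List (Finset (Fin n)) → Fin n → ℝ)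
    (hEp : ∀ hist, Set.ncard {j : Fin n | E hist j ≠ 0} ≤ p) :
    ENNReal.ofReal (1 / (k : ℝ) ^ k) ≤
      (pkcGame n p E (⌊(k : ℝ) / (p : ℝ) * (1 - Real.exp (-(c : ℝ)))⌋₊ - 1) S₁ []
          (fun _ => 0)).toOuterMeasure
        {g : Fin n → ℝ | (k : ℝ) / (2 * Real.exp c) ≤
          (Set.ncard {j : Fin n | (c : ℝ) / 2 ≤ g j} : ℝ)} := by
  change _ ≤ (pkcGame n p E (pkcSteps p k c) S₁ [] _).toOuterMeasure _
  have hpk' := cast_le_mul_exp_neg_div_two hp hkpc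
  have hpt := mul_pkcSteps_le_self hp hc hpk'
  obtain ⟨T, -, hTcard, x, hx, hprob⟩ := exists_survivors_le_pkcGame_apply hEp (pkcSteps p k c)
    S₁ [] (fun _ => 0) (hS₁ ▸ hpt) fun _ _ => le_rfl
  rw [hS₁] at hTcard hx hprob
  have hgain := half_le_sum_div hp hc hpt hpk' (sub_two_mul_lt_mul_pkcSteps hp)
  refine (ofReal_inv_pow_self_le_prod_inv_choose (hp.trans hpk) hpt).trans (hprob.trans ?_)
  rw [← PMF.toOuterMeasure_apply_singleton]
  refine PMF.toOuterMeasure_mono _ fun y hy => ?_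
  obtain rfl : y = x := hy.1
  calc (k : ℝ) / (2 * exp c) ≤ ((k - p * pkcSteps p k c : ℕ) : ℝ) :=
        div_two_mul_exp_le_sub_mul_pkcSteps hp hc hpk'
    _ = T.card := by rw [hTcard]
    _ ≤ _ := by
        rw [← Set.ncard_coe_finset]
        refine Nat.cast_le.2 (Set.ncard_le_ncard (fun j hj => ?_) (Set.toFinite _))
        exact hgain.trans (by simpa using hx j hj)

/-- Against every adaptive deterministic emptier, the `(p,k,c)`-filling strategy makes at
least `k/(2e^c)` cups have fill at least `c/2` after its final step, with probability at
least `k^{-k}`. -/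
theorem stmt_1 (n p k c : ℕ) (hp : 1 ≤ p) (hc : 2 ≤ c) (hpk : p ≤ k) (hkn : k ≤ n)
    (hkpc : 2 ≤ (k : ℝ) / ((p : ℝ) * Real.exp c))
    (S₁ : Finset (Fin n)) (hS₁ : S₁.card = k)
    (E : List (Finset (Fin n)) → Fin n → ℝ)
    (hE0 : ∀ hist j, 0 ≤ E hist j) (hE1 : ∀ hist j, E hist j ≤ 1)
    (hEp : ∀ hist, Set.ncard {j : Fin n | E hist j ≠ 0} ≤ p) :
    ENNReal.ofReal (1 / (k : ℝ) ^ k) ≤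
      (pkcGame n p E (⌊(k : ℝ) / (p : ℝ) * (1 - Real.exp (-(c : ℝ)))⌋₊ - 1) S₁ []
          (fun _ => 0)).toOuterMeasure
        {g : Fin n → ℝ | (k : ℝ) / (2 * Real.exp c) ≤
          (Set.ncard {j : Fin n | (c : ℝ) / 2 ≤ g j} : ℝ)} :=
  stmt_1_general n p k c hp hc hpk hkpc S₁ hS₁ E hEp
end

section
/- Let c be a monotone stateless emptier on n cups that, in every state having at least one cup with positive fill, selects a cup with positive fill. Then there exist functions σ_1,…,σ_n from the nonnegative integer multiples of 1/2 to ℝ, each strictly increasing and with all values σ_j(v) pairwise distinct over pairs (j,v), such that for every state S having at least one cup with positive fill, c(S) is the unique cup j maximizing σ_j(S(j)). -/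
/-- A state of `n` cups: each fill is a nonnegative integer multiple of `1/2`. -/
def HalfState (n : ℕ) (S : Fin n → ℝ) : Prop := ∀ i, ∃ k : ℕ, S i = (k : ℝ) / 2

/-- A stateless emptier `c` is monotone if whenever `c S = j` and `S'` agrees with `S`
except that the fill of a single cup `i ≠ j` has been reduced, then `c S' = j`. -/
def MonotoneEmptier (n : ℕ) (c : (Fin n → ℝ) → Fin n) : Prop :=
  ∀ S S' : Fin n → ℝ, HalfState n S → HalfState n S' →
    ∀ i : Fin n, i ≠ c S → S' i ≤ S i → (∀ j, j ≠ i → S' j = S j) → c S' = c S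

/-
Call cup `i` at fill `u` stronger than cup `j` at fill `v` if `c` selects `i` in the state
holding only these two fills. Monotonicity lets us empty every unselected cup without changing
the selection, so in any state the selected cup is stronger than every other nonempty cup, and
looking at a three-cup state shows that "stronger" is transitive. It is thus a strict total order
on the countable set of (cup, positive fill) pairs, which embeds into `ℚ`; composing with `exp`
gives positive scores, and the empty cup `j` receives the score `-j`.
-/

open Function

def SelectsPositive (n : ℕ) (c : (Fin n → ℝ) → Fin n) : Prop :=
  ∀ S : Fin n → ℝ, HalfState n S → (∃ i, 0 < S i) → 0 < S (c S)

section HalfState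

variable {n : ℕ} {S T : Fin n → ℝ}

lemma HalfState.nonneg (hS : HalfState n S) (i : Fin n) : 0 ≤ S i := by
  obtain ⟨k, hk⟩ := hS i
  rw [hk]
  positivity

lemma HalfState.add (hS : HalfState n S) (hT : HalfState n T) : HalfState n (S + T) := by
  intro i
  obtain ⟨a, ha⟩ := hS i
  obtain ⟨b, hb⟩ := hT i
  exact ⟨a + b, by rw [Pi.add_apply, ha, hb]; push_cast; ring⟩

lemma halfState_single (j : Fin n) {v : ℝ} (hv : ∃ k : ℕ, v = k / 2) :
    HalfState n (Pi.single j v) := by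
  intro i
  by_cases h : i = j
  · subst h
    simpa using hv
  · exact ⟨0, by simp [h]⟩

end HalfState

/-- As `k` ranges over `ℕ`, `level k` ranges over the positive fills. -/
noncomputable def level (k : ℕ) : ℝ := (k + 1) / 2

lemma level_pos (k : ℕ) : 0 < level k := by
  unfold level
  positivity

lemma level_half (k : ℕ) : ∃ m : ℕ, level k = m / 2 := ⟨k + 1, by simp [level]⟩

lemma level_strictMono : StrictMono level := fun a b h => by
  unfold level
  gcongr

lemma eq_zero_or_eq_level {v : ℝ} (hv : ∃ k : ℕ, v = k / 2) :
    v = 0 ∨ ∃ k, v = level k := by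
  obtain ⟨_ | k, rfl⟩ := hv
  · simp
  · exact Or.inr ⟨k, by simp [level]⟩

noncomputable def twoCup {n : ℕ} (j i : Fin n) (v u : ℝ) : Fin n → ℝ :=
  Pi.single j v + Pi.single i u

section TwoCup

variable {n : ℕ} {j i : Fin n} {v u : ℝ}

lemma twoCup_comm (j i : Fin n) (v u : ℝ) : twoCup j i v u = twoCup i j u v := add_comm _ _

@[simp]
lemma twoCup_apply_left (h : j ≠ i) : twoCup j i v u j = v := by simp [twoCup, h.symm]

@[simp]
lemma twoCup_apply_right (h : j ≠ i) : twoCup j i v u i = u := by simp [twoCup, h]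

lemma twoCup_apply_of_ne {m : Fin n} (hj : m ≠ j) (hi : m ≠ i) : twoCup j i v u m = 0 := by
  simp [twoCup, hj, hi]

lemma halfState_twoCup (j i : Fin n) (a b : ℕ) : HalfState n (twoCup j i (level a) (level b)) :=
  (halfState_single j (level_half a)).add (halfState_single i (level_half b))

lemma twoCup_le {S : Fin n → ℝ} (hS : HalfState n S) (h : j ≠ i) :
    twoCup j i (S j) (S i) ≤ S := by
  intro m
  by_cases hj : m = j
  · subst hj
    simp [h]
  by_cases hi : m = i
  · subst hi
    simp [h]
  rw [twoCup_apply_of_ne hj hi]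
  exact hS.nonneg m

end TwoCup

namespace SelectsPositive

variable {n : ℕ} {c : (Fin n → ℝ) → Fin n}

theorem apply_twoCup_eq_or_eq (hpos : SelectsPositive n c) {j i : Fin n} (hji : j ≠ i)
    (a b : ℕ) :
    c (twoCup j i (level a) (level b)) = j ∨ c (twoCup j i (level a) (level b)) = i := by
  by_contra! h
  have := hpos _ (halfState_twoCup j i a b) ⟨j, by simpa [hji] using level_pos a⟩
  rw [twoCup_apply_of_ne h.1 h.2] at this
  exact this.false

end SelectsPositive

namespace MonotoneEmptier

variable {n : ℕ} {c : (Fin n → ℝ) → Fin n}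

theorem apply_eq_of_le (hmono : MonotoneEmptier n c) {S S' : Fin n → ℝ}
    (hS : HalfState n S) (hS' : HalfState n S') (hle : S' ≤ S) (hsel : S' (c S) = S (c S)) :
    c S' = c S := by
  have hhalf (B : Finset (Fin n)) : HalfState n (B.piecewise S' S) := fun i =>
    B.piecewise_cases S' S (fun x => ∃ k : ℕ, x = k / 2) (hS' i) (hS i)
  suffices ∀ B : Finset (Fin n), c (B.piecewise S' S) = c S by
    simpa using this Finset.univ
  intro B
  induction B using Finset.induction_on with
  | empty => simp
  | insert a B ha ih =>
    have hupd := Finset.piecewise_insert B S' S a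
    by_cases hac : a = c S
    · rw [hupd, update_eq_self_iff.2 (by rw [Finset.piecewise_eq_of_notMem _ _ _ ha, hac, hsel])]
      exact ih
    · rw [← ih]
      refine hmono _ _ (hhalf B) (hhalf _) a (by rwa [ih]) ?_ fun m hm => by
        rw [hupd, update_of_ne hm]
      rw [hupd, update_self, Finset.piecewise_eq_of_notMem _ _ _ ha]
      exact hle a

theorem apply_twoCup_of_apply_eq (hmono : MonotoneEmptier n c) {T : Fin n → ℝ} {j i : Fin n}
    (hT : HalfState n T) (hTi : c T = i) (hji : j ≠ i) {a b : ℕ} (ha : T j = level a)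
    (hb : T i = level b) : c (twoCup j i (level a) (level b)) = i := by
  subst hTi
  rw [← ha, ← hb]
  refine hmono.apply_eq_of_le hT ?_ (twoCup_le hT hji) (twoCup_apply_right hji)
  rw [ha, hb]
  exact halfState_twoCup j _ a b

theorem apply_twoCup_of_left_le (hmono : MonotoneEmptier n c) {j i : Fin n} (hji : j ≠ i)
    {a a' b : ℕ} (h : c (twoCup j i (level a) (level b)) = i) (ha : a' ≤ a) :
    c (twoCup j i (level a') (level b)) = i := by
  refine (hmono _ _ (halfState_twoCup j i a b) (halfState_twoCup j i a' b) j (by rwa [h])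
    ?_ ?_).trans h
  · simpa [hji] using level_strictMono.monotone ha
  · intro m hm
    simp [twoCup, hm]

theorem apply_twoCup_of_le_of_le (hmono : MonotoneEmptier n c) (hpos : SelectsPositive n c)
    {j i : Fin n} (hji : j ≠ i) {a a' b b' : ℕ} (h : c (twoCup j i (level a) (level b)) = i)
    (ha : a' ≤ a) (hb : b ≤ b') : c (twoCup j i (level a') (level b')) = i := by
  refine (hpos.apply_twoCup_eq_or_eq hji a' b').resolve_left fun hj => hji ?_
  have hj' := hmono.apply_twoCup_of_left_le hji.symm (by rwa [twoCup_comm] at hj) hb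
  rw [twoCup_comm, hmono.apply_twoCup_of_left_le hji h ha] at hj'
  exact hj'.symm

/-- In the three-cup state holding all three fills, selecting `j` or `i` would, after emptying
the third cup, contradict `h₁` or `h₂`. -/
theorem apply_twoCup_trans (hmono : MonotoneEmptier n c) (hpos : SelectsPositive n c)
    {j i l : Fin n} (hji : j ≠ i) (hil : i ≠ l) (hjl : j ≠ l) {a b d : ℕ}
    (h₁ : c (twoCup j i (level a) (level b)) = i)
    (h₂ : c (twoCup i l (level b) (level d)) = l) :
    c (twoCup j l (level a) (level d)) = l := by
  set T : Fin n → ℝ := Pi.single j (level a) + Pi.single i (level b) + Pi.single l (level d)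
  have hT : HalfState n T := ((halfState_single j (level_half a)).add
    (halfState_single i (level_half b))).add (halfState_single l (level_half d))
  have hTj : T j = level a := by simp [T, hji, hjl]
  have hTi : T i = level b := by simp [T, hji.symm, hil]
  have hTl : T l = level d := by simp [T, hjl.symm, hil.symm]
  have hcT : c T = j ∨ c T = i ∨ c T = l := by
    by_contra! h
    have := hpos T hT ⟨j, hTj ▸ level_pos a⟩
    simp [T, h.1, h.2.1, h.2.2] at this
  rcases hcT with hc | hc | hc
  · have := hmono.apply_twoCup_of_apply_eq hT hc hji.symm hTi hTj
    rw [twoCup_comm, h₁] at this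
    exact absurd this hji.symm
  · have := hmono.apply_twoCup_of_apply_eq hT hc hil.symm hTl hTi
    rw [twoCup_comm, h₂] at this
    exact absurd this hil.symm
  · exact hmono.apply_twoCup_of_apply_eq hT hc hjl hTj hTl

end MonotoneEmptier

/-- The pair `(j, k)` stands for cup `j` at fill `level k`; `ScoreLt c p q` says that `q` beats
`p`. -/
def ScoreLt {n : ℕ} (c : (Fin n → ℝ) → Fin n) (p q : Fin n × ℕ) : Prop :=
  if p.1 = q.1 then p.2 < q.2 else c (twoCup p.1 q.1 (level p.2) (level q.2)) = q.1

theorem isStrictTotalOrder_scoreLt {n : ℕ} {c : (Fin n → ℝ) → Fin n}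
    (hmono : MonotoneEmptier n c) (hpos : SelectsPositive n c) :
    IsStrictTotalOrder (Fin n × ℕ) (ScoreLt c) where
  irrefl p := by simp [ScoreLt]
  trichotomous := by
    rintro ⟨j, a⟩ ⟨i, b⟩ hlt hgt
    by_cases hji : j = i
    · subst hji
      simp only [ScoreLt, if_true] at hlt hgt
      rw [le_antisymm (not_lt.1 hgt) (not_lt.1 hlt)]
    · simp only [ScoreLt, if_neg hji, if_neg (Ne.symm hji), twoCup_comm i j] at hlt hgt
      exact absurd ((hpos.apply_twoCup_eq_or_eq hji a b).resolve_left hgt) hlt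
  trans := by
    rintro ⟨j, a⟩ ⟨i, b⟩ ⟨l, d⟩ h₁ h₂
    by_cases hji : j = i <;> by_cases hil : i = l
    · subst hji hil
      simp only [ScoreLt, if_true] at h₁ h₂ ⊢
      exact h₁.trans h₂
    · subst hji
      simp only [ScoreLt, if_true, if_neg hil] at h₁ h₂ ⊢
      exact hmono.apply_twoCup_of_le_of_le hpos hil h₂ h₁.le le_rfl
    · subst hil
      simp only [ScoreLt, if_true, if_neg hji] at h₁ h₂ ⊢
      exact hmono.apply_twoCup_of_le_of_le hpos hji h₁ le_rfl h₂.le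
    by_cases hjl : j = l
    · subst hjl
      simp only [ScoreLt, if_true, if_neg hji, if_neg hil] at h₁ h₂ ⊢
      by_contra! hda
      have := hmono.apply_twoCup_of_le_of_le hpos hji h₁ hda le_rfl
      rw [twoCup_comm, h₂] at this
      exact hji this
    · simp only [ScoreLt, if_neg hji, if_neg hil, if_neg hjl] at h₁ h₂ ⊢
      exact hmono.apply_twoCup_trans hpos hji hil hjl h₁ h₂

theorem exists_pos_strictMono_of_isStrictTotalOrder {α : Type*} [Countable α]
    (r : α → α → Prop) [IsStrictTotalOrder α r] :
    ∃ f : α → ℝ, (∀ a, 0 < f a) ∧ Injective f ∧ ∀ a b, r a b → f a < f b := by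
  classical
  let := linearOrderOfSTO r
  obtain ⟨e⟩ := Order.embedding_from_countable_to_dense α ℚ
  have hf : StrictMono fun a => Real.exp (e a) :=
    Real.exp_strictMono.comp (Rat.cast_strictMono.comp e.strictMono)
  exact ⟨_, fun a => Real.exp_pos _, hf.injective, fun a b h => hf h⟩

/-- On positive half-integers `v`, `⌊2 * v⌋₊ - 1` inverts `level`. -/
noncomputable def score {n : ℕ} (E : Fin n × ℕ → ℝ) (j : Fin n) (v : ℝ) : ℝ :=
  if v = 0 then -(j : ℕ) else E (j, ⌊2 * v⌋₊ - 1)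

section Score

variable {n : ℕ} {E : Fin n × ℕ → ℝ}

@[simp]
lemma score_zero (j : Fin n) : score E j 0 = -(j : ℕ) := by simp [score]

@[simp]
lemma score_level (j : Fin n) (k : ℕ) : score E j (level k) = E (j, k) := by
  have h : 2 * level k = (k + 1 : ℕ) := by push_cast [level]; ring
  rw [score, if_neg (level_pos k).ne', h, Nat.floor_natCast, Nat.add_sub_cancel]

lemma score_zero_lt_score_level (hE : ∀ p, 0 < E p) (j i : Fin n) (k : ℕ) :
    score E j 0 < score E i (level k) := by
  rw [score_zero, score_level]
  linarith [hE (i, k), (j : ℕ).cast_nonneg (α := ℝ)]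

lemma strictMonoOn_score (hE : ∀ p, 0 < E p) (hmono : ∀ j, StrictMono fun k => E (j, k))
    (j : Fin n) : StrictMonoOn (score E j) {x : ℝ | ∃ k : ℕ, x = k / 2} := by
  intro x hx y hy hxy
  obtain ⟨b, rfl⟩ := (eq_zero_or_eq_level hy).resolve_left
    (hxy.trans_le' (by obtain ⟨k, rfl⟩ := hx; positivity)).ne'
  rcases eq_zero_or_eq_level hx with rfl | ⟨a, rfl⟩
  · exact score_zero_lt_score_level hE j j b
  · rw [score_level, score_level]
    exact hmono j (level_strictMono.lt_iff_lt.1 hxy)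

lemma eq_and_eq_of_score_eq (hE : ∀ p, 0 < E p) (hinj : Injective E) {j j' : Fin n}
    {v v' : ℝ} (hv : ∃ k : ℕ, v = k / 2) (hv' : ∃ k : ℕ, v' = k / 2)
    (h : score E j v = score E j' v') : j = j' ∧ v = v' := by
  rcases eq_zero_or_eq_level hv with rfl | ⟨a, rfl⟩ <;>
    rcases eq_zero_or_eq_level hv' with rfl | ⟨b, rfl⟩
  · simp only [score_zero, neg_inj, Nat.cast_inj] at h
    exact ⟨Fin.ext h, rfl⟩
  · exact absurd h (score_zero_lt_score_level hE j j' b).ne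
  · exact absurd h.symm (score_zero_lt_score_level hE j' j a).ne
  · simp only [score_level] at h
    obtain ⟨rfl, rfl⟩ := Prod.ext_iff.1 (hinj h)
    exact ⟨rfl, rfl⟩

end Score

/-- Every monotone stateless emptier (that selects a positive-fill cup whenever one
exists) is a score-based emptier: there are strictly increasing score functions
`σ j` on the nonnegative half-integer fills, with pairwise distinct values over pairs
`(j, v)`, such that in every state with a positively filled cup the selected cup is the
unique cup maximizing `σ j (S j)`. -/
theorem stmt_4 (n : ℕ) (c : (Fin n → ℝ) → Fin n) (hmono : MonotoneEmptier n c)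
    (hpos : ∀ S : Fin n → ℝ, HalfState n S → (∃ i, 0 < S i) → 0 < S (c S)) :
    ∃ σ : Fin n → ℝ → ℝ,
      (∀ j, StrictMonoOn (σ j) {x : ℝ | ∃ k : ℕ, x = (k : ℝ) / 2}) ∧
      (∀ j v j' v', (∃ k : ℕ, v = (k : ℝ) / 2) → (∃ k : ℕ, v' = (k : ℝ) / 2) →
        σ j v = σ j' v' → j = j' ∧ v = v') ∧
      (∀ S : Fin n → ℝ, HalfState n S → (∃ i, 0 < S i) →
        ∀ j, j ≠ c S → σ j (S j) < σ (c S) (S (c S))) := by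
  have := isStrictTotalOrder_scoreLt hmono hpos
  obtain ⟨E, hE_pos, hE_inj, hE_lt⟩ := exists_pos_strictMono_of_isStrictTotalOrder (ScoreLt c)
  have hE_mono (j : Fin n) : StrictMono fun k => E (j, k) := fun a b hab =>
    hE_lt _ _ (by simpa [ScoreLt] using hab)
  refine ⟨score E, strictMonoOn_score hE_pos hE_mono,
    fun j v j' v' hv hv' => eq_and_eq_of_score_eq hE_pos hE_inj hv hv', ?_⟩
  intro S hS hS_pos j hj
  obtain ⟨b, hb⟩ := (eq_zero_or_eq_level (hS (c S))).resolve_left (hpos S hS hS_pos).ne'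
  rcases eq_zero_or_eq_level (hS j) with ha | ⟨a, ha⟩
  · rw [ha, hb]
    exact score_zero_lt_score_level hE_pos j _ b
  · rw [ha, hb, score_level, score_level]
    refine hE_lt (j, a) (c S, b) ?_
    simpa only [ScoreLt, if_neg hj] using hmono.apply_twoCup_of_apply_eq hS rfl hj ha hb
end

section
/- Let r_1,…,r_n be independent random variables, each uniformly distributed on [0,1), and let a_1,…,a_n and c_1,…,c_n be nonnegative real numbers. Define X_j = ⌊r_j + a_j + c_j⌋ − ⌊r_j + a_j⌋ − ⌊c_j⌋. Then almost surely each X_j ∈ {0,1}; moreover P(X_j = 1) = c_j − ⌊c_j⌋ for each j, and the random variables X_1,…,X_n are mutually independent. -/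
/-!
The carry `⌊x + y⌋ - ⌊x⌋ - ⌊y⌋` is `0` or `1`, and it is `1` exactly when
`fract x + fract y ≥ 1`. With `x = r + a` and `y = c`, the event `X = 1` is therefore
`fract (r + a) ≥ 1 - fract c`. Since `t ↦ fract (t + a)` is a rotation of the circle `[0,1)`,
it maps the uniform distribution to itself, so this event has probability `fract c`.
Each `X j` is a measurable function of `r j` alone, which gives independence.
-/

open MeasureTheory ProbabilityTheory Set

namespace Int

variable {R : Type*} [CommRing R] [LinearOrder R] [IsStrictOrderedRing R] [FloorRing R]

theorem floor_add_sub_floor_sub_floor_eq_zero_or_one (a b : R) :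
    ⌊a + b⌋ - ⌊a⌋ - ⌊b⌋ = 0 ∨ ⌊a + b⌋ - ⌊a⌋ - ⌊b⌋ = 1 := by
  have := le_floor_add a b
  have := le_floor_add_floor a b
  omega

theorem floor_add_sub_floor_sub_floor_eq_one_iff (a b : R) :
    ⌊a + b⌋ - ⌊a⌋ - ⌊b⌋ = 1 ↔ 1 ≤ fract a + fract b := by
  have hcarry : ((⌊a + b⌋ - ⌊a⌋ - ⌊b⌋ : ℤ) : R) = fract a + fract b - fract (a + b) := by
    push_cast
    simp only [fract]
    abel
  have := fract_nonneg (a + b)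
  have := fract_lt_one (a + b)
  rcases floor_add_sub_floor_sub_floor_eq_zero_or_one a b with h | h <;>
    rw [h] at hcarry ⊢ <;> push_cast at hcarry
  · simp only [zero_ne_one, false_iff, not_le]
    linarith
  · simp only [true_iff]
    linarith

end Int

namespace Real

theorem map_add_const_volume_restrict_Ico (a b β : ℝ) :
    (volume.restrict (Ico a b)).map (· + β) = volume.restrict (Ico (a + β) (b + β)) := by
  have := (measurableEmbedding_addRight β).restrict_map volume (Ico (a + β) (b + β))
  rwa [map_add_right_eq_self, preimage_add_const_Ico, add_sub_cancel_right, add_sub_cancel_right,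
    eq_comm] at this

theorem map_fract_add_volume_restrict_Ico (α : ℝ) :
    (volume.restrict (Ico (0 : ℝ) 1)).map (fun t ↦ Int.fract (t + α)) =
      volume.restrict (Ico (0 : ℝ) 1) := by
  set β := Int.fract α
  have hβ0 : 0 ≤ β := Int.fract_nonneg α
  have hβ1 : β < 1 := Int.fract_lt_one α
  have hshift : (fun t : ℝ ↦ Int.fract (t + α)) = fun t ↦ Int.fract (t + β) := by
    funext t
    rw [← Int.fract_add_intCast (t + β) ⌊α⌋, add_assoc, Int.fract_add_floor]
  have hsplit : ∀ γ, 0 ≤ γ → γ ≤ 1 → volume.restrict (Ico (0 : ℝ) 1) =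
      volume.restrict (Ico 0 γ) + volume.restrict (Ico γ 1) := fun γ h0 h1 ↦ by
    rw [← Measure.restrict_union Ico_disjoint_Ico_same measurableSet_Ico,
      Ico_union_Ico_eq_Ico h0 h1]
  have hlow : (fun t ↦ Int.fract (t + β)) =ᵐ[volume.restrict (Ico 0 (1 - β))] (· + β) :=
    ae_restrict_of_forall_mem measurableSet_Ico fun t ht ↦
      Int.fract_eq_self.2 ⟨by linarith [ht.1], by linarith [ht.2]⟩
  have hhigh : (fun t ↦ Int.fract (t + β)) =ᵐ[volume.restrict (Ico (1 - β) 1)] (· + (β - 1)) :=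
    ae_restrict_of_forall_mem measurableSet_Ico fun t ht ↦
      Int.fract_eq_iff.2 ⟨by linarith [ht.1], by linarith [ht.2], 1, by push_cast; ring⟩
  conv_lhs => rw [hshift, hsplit (1 - β) (by linarith) (by linarith),
    Measure.map_add _ _ (by fun_prop), Measure.map_congr hlow, Measure.map_congr hhigh,
    map_add_const_volume_restrict_Ico, map_add_const_volume_restrict_Ico, add_comm]
  rw [hsplit β hβ0 hβ1.le]
  congr 3 <;> ring

theorem volume_restrict_Ico_zero_one_Ici {s : ℝ} (hs : 0 ≤ s) :
    volume.restrict (Ico (0 : ℝ) 1) (Ici s) = ENNReal.ofReal (1 - s) := by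
  rw [Measure.restrict_apply measurableSet_Ici, Ici_inter_Ico_of_le hs, volume_Ico]

end Real

theorem map_fract_add_eq_volume_restrict_Ico {Ω : Type*} [MeasurableSpace Ω] {μ : Measure Ω}
    {U : Ω → ℝ} (hU : Measurable U) (hunif : μ.map U = volume.restrict (Ico (0 : ℝ) 1))
    (α : ℝ) : μ.map (fun ω ↦ Int.fract (U ω + α)) = volume.restrict (Ico (0 : ℝ) 1) := by
  rw [← Real.map_fract_add_volume_restrict_Ico α, ← hunif, Measure.map_map (by fun_prop) hU]
  rfl

theorem stmt_9_general {Ω : Type*} [MeasurableSpace Ω] (μ : Measure Ω) [IsProbabilityMeasure μ]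
    (n : ℕ) (r : Fin n → Ω → ℝ) (hmeas : ∀ j, Measurable (r j))
    (hindep : iIndepFun r μ)
    (hunif : ∀ j, μ.map (r j) = volume.restrict (Set.Ico (0 : ℝ) 1))
    (a c : Fin n → ℝ)
    (X : Fin n → Ω → ℤ)
    (hX : ∀ j ω, X j ω = ⌊r j ω + a j + c j⌋ - ⌊r j ω + a j⌋ - ⌊c j⌋) :
    (∀ j, ∀ᵐ ω ∂μ, X j ω = 0 ∨ X j ω = 1) ∧
      (∀ j, μ {ω | X j ω = 1} = ENNReal.ofReal (c j - ⌊c j⌋)) ∧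
      iIndepFun X μ := by
  refine ⟨fun j ↦ .of_forall fun ω ↦ hX j ω ▸
    Int.floor_add_sub_floor_sub_floor_eq_zero_or_one _ _, fun j ↦ ?_, ?_⟩
  · have hevent : {ω | X j ω = 1} =
        (fun ω ↦ Int.fract (r j ω + a j)) ⁻¹' Ici (1 - Int.fract (c j)) := by
      ext ω
      rw [mem_ofPred_eq, mem_preimage, mem_Ici, hX, Int.floor_add_sub_floor_sub_floor_eq_one_iff,
        sub_le_iff_le_add]
    rw [hevent, ← Measure.map_apply (by fun_prop) measurableSet_Ici,
      map_fract_add_eq_volume_restrict_Ico (hmeas j) (hunif j),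
      Real.volume_restrict_Ico_zero_one_Ici (by linarith [Int.fract_lt_one (c j)]),
      Int.self_sub_floor, sub_sub_cancel]
  · have hXr : X = fun j ↦ (fun t ↦ ⌊t + a j + c j⌋ - ⌊t + a j⌋ - ⌊c j⌋) ∘ r j := by
      funext j ω
      exact hX j ω
    exact hXr ▸ hindep.comp _ fun j ↦ by fun_prop

/-- Counting threshold crossings: with `r j` independent uniform offsets on `[0,1)` and
fixed nonnegative `a j` (previously poured water) and `c j` (newly poured water), the
extra threshold-crossing counts `X j = ⌊r j + a j + c j⌋ − ⌊r j + a j⌋ − ⌊c j⌋` are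
almost surely `{0,1}`-valued, satisfy `P(X j = 1) = c j − ⌊c j⌋`, and are mutually
independent. -/
theorem stmt_9 {Ω : Type*} [MeasurableSpace Ω] (μ : Measure Ω) [IsProbabilityMeasure μ]
    (n : ℕ) (r : Fin n → Ω → ℝ) (hmeas : ∀ j, Measurable (r j))
    (hindep : iIndepFun r μ)
    (hunif : ∀ j, μ.map (r j) = volume.restrict (Set.Ico (0 : ℝ) 1))
    (a c : Fin n → ℝ) (ha : ∀ j, 0 ≤ a j) (hc : ∀ j, 0 ≤ c j)
    (X : Fin n → Ω → ℤ)
    (hX : ∀ j ω, X j ω = ⌊r j ω + a j + c j⌋ - ⌊r j ω + a j⌋ - ⌊c j⌋) :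
    (∀ j, ∀ᵐ ω ∂μ, X j ω = 0 ∨ X j ω = 1) ∧
      (∀ j, μ {ω | X j ω = 1} = ENNReal.ofReal (c j - ⌊c j⌋)) ∧
      iIndepFun X μ :=
  stmt_9_general μ n r hmeas hindep hunif a c X hX
end

section
/- Let r_1,…,r_n and p_1,…,p_n be 2n mutually independent random variables, each uniformly distributed on [0,1); let a_1,…,a_n and c_1,…,c_n be nonnegative reals; let q ≥ 1 be an integer and ℓ ∈ {1,…,q}; and set s = ∑_{j=1}^n min(c_j, 1). Let Y be the number of indices j such that ⌊q·p_j⌋ + 1 = ℓ and ⌊r_j + a_j + c_j⌋ ≥ ⌊r_j + a_j⌋ + 1. Then P(Y < s/(2q)) ≤ exp(−s/(8q)). -/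
/-!
A cup is counted exactly when the fractional part of `r + a` lies in `[1 - c, 1)` and `p` lies in
`[(ℓ - 1)/q, ℓ/q)`. Since `r` is uniform, so is the fractional part of `r + a`, hence cup `j` is
counted with probability `min (c j) 1 / q`, independently of the other cups. `Y` is therefore a
sum of independent indicators with mean `m = s/q`, and the Chernoff bound at `t = -log 2` gives
`P(Y ≤ m/2) ≤ 2^{m/2} e^{-m/2} ≤ e^{-m/8}`, because `log 2 ≤ 3/4`.
-/

open MeasureTheory ProbabilityTheory Set Real

def crossingSet (a c : ℝ) : Set ℝ := {y | ⌊y + a⌋ + 1 ≤ ⌊y + a + c⌋}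

def prioritySet (q ℓ : ℕ) : Set ℝ := {x | ⌊(q : ℝ) * x⌋ + 1 = ℓ}

theorem measurableSet_crossingSet (a c : ℝ) : MeasurableSet (crossingSet a c) :=
  measurableSet_le (by fun_prop) (by fun_prop)

theorem measurableSet_prioritySet (q ℓ : ℕ) : MeasurableSet (prioritySet q ℓ) :=
  measurableSet_eq_fun (by fun_prop) (by fun_prop)

theorem Int.floor_add_one_le_floor_add_iff {R : Type*} [CommRing R] [LinearOrder R]
    [IsStrictOrderedRing R] [FloorRing R] (x c : R) :
    ⌊x⌋ + 1 ≤ ⌊x + c⌋ ↔ 1 - c ≤ Int.fract x := by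
  rw [Int.le_floor, Int.fract]
  push_cast
  constructor <;> intro h <;> linarith

theorem volume_Ico_inter_setOf_le_fract_add (a c : ℝ) :
    volume (Ico 0 1 ∩ {y | 1 - c ≤ Int.fract (y + a)}) = ENNReal.ofReal (min c 1) := by
  set f := Int.fract a
  have hf0 : 0 ≤ f := Int.fract_nonneg a
  have hf1 : f < 1 := Int.fract_lt_one a
  -- `y + a` passes the integer `⌊a⌋ + 1` exactly at `y = 1 - f`
  have hlow : Ico 0 (1 - f) ∩ {y | 1 - c ≤ Int.fract (y + a)} =
      Ico (max 0 (1 - f - c)) (1 - f) := by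
    ext y
    simp only [mem_inter_iff, mem_Ico, mem_ofPred_eq, max_le_iff]
    refine ⟨fun ⟨⟨h0, h1⟩, h⟩ => ?_, fun ⟨⟨h0, h⟩, h1⟩ => ?_⟩
    all_goals have e : Int.fract (y + a) = y + f :=
      Int.fract_eq_iff.mpr ⟨by linarith, by linarith, ⌊a⌋,
        by simp only [f, Int.fract]; ring⟩
    all_goals exact ⟨⟨by linarith, by linarith⟩, by linarith⟩
  have hhigh : Ico (1 - f) 1 ∩ {y | 1 - c ≤ Int.fract (y + a)} =
      Ico (max (1 - f) (2 - f - c)) 1 := by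
    ext y
    simp only [mem_inter_iff, mem_Ico, mem_ofPred_eq, max_le_iff]
    refine ⟨fun ⟨⟨h0, h1⟩, h⟩ => ?_, fun ⟨⟨h0, h⟩, h1⟩ => ?_⟩
    all_goals have e : Int.fract (y + a) = y + f - 1 :=
      Int.fract_eq_iff.mpr ⟨by linarith, by linarith, ⌊a⌋ + 1,
        by simp only [f, Int.fract]; push_cast; ring⟩
    all_goals exact ⟨⟨by linarith, by linarith⟩, by linarith⟩
  rw [← Ico_union_Ico_eq_Ico (b := 1 - f) (by linarith) (by linarith), union_inter_distrib_right,
    hlow, hhigh, measure_union (Ico_disjoint_Ico.mpr (by simp)) measurableSet_Ico,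
    Real.volume_Ico, Real.volume_Ico]
  rcases le_or_gt c (1 - f) with h | h
  · rw [max_eq_right (by linarith), max_eq_right (by linarith),
      ENNReal.ofReal_of_nonpos (show 1 - (2 - f - c) ≤ 0 by linarith), add_zero,
      min_eq_left (by linarith)]
    ring_nf
  · rw [max_eq_left (by linarith),
      ← ENNReal.ofReal_add (by linarith) (sub_nonneg.mpr (max_le (by linarith) (by linarith)))]
    congr 1
    rw [max_def, min_def]
    split_ifs <;> linarith

theorem volume_restrict_Ico_crossingSet (a c : ℝ) :
    volume.restrict (Ico 0 1) (crossingSet a c) = ENNReal.ofReal (min c 1) := by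
  simp_rw [Measure.restrict_apply' measurableSet_Ico, crossingSet,
    Int.floor_add_one_le_floor_add_iff, inter_comm]
  exact volume_Ico_inter_setOf_le_fract_add a c

theorem setOf_floor_mul_eq {K : Type*} [Field K] [LinearOrder K] [IsStrictOrderedRing K]
    [FloorRing K] {q : K} (hq : 0 < q) (k : ℤ) :
    {x : K | ⌊q * x⌋ = k} = Ico (k / q) ((k + 1) / q) := by
  ext x
  simp only [mem_ofPred_eq, mem_Ico, Int.floor_eq_iff, div_le_iff₀ hq, lt_div_iff₀ hq,
    mul_comm x]

theorem volume_restrict_Ico_prioritySet {q ℓ : ℕ} (hℓ : 1 ≤ ℓ) (hℓq : ℓ ≤ q) :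
    volume.restrict (Ico 0 1) (prioritySet q ℓ) = ENNReal.ofReal (1 / q) := by
  have hq : (0 : ℝ) < q := by exact_mod_cast hℓ.trans hℓq
  have hℓ' : (1 : ℝ) ≤ ℓ := by exact_mod_cast hℓ
  have hℓq' : (ℓ : ℝ) ≤ q := by exact_mod_cast hℓq
  have hset : prioritySet q ℓ = Ico (((ℓ : ℝ) - 1) / q) (ℓ / q) := by
    simp_rw [prioritySet, ← eq_sub_iff_add_eq, setOf_floor_mul_eq hq]
    push_cast
    ring_nf
  have hsub : Ico (((ℓ : ℝ) - 1) / q) (ℓ / q) ⊆ Ico (0 : ℝ) 1 :=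
    Ico_subset_Ico (div_nonneg (by linarith) hq.le) ((div_le_one hq).mpr hℓq')
  rw [Measure.restrict_apply' measurableSet_Ico, hset, inter_eq_left.mpr hsub, Real.volume_Ico]
  ring_nf

theorem Set.ncard_setOf_mem_eq_sum_indicator_one {ι Ω : Type*} [Fintype ι] (E : ι → Set Ω)
    (ω : Ω) : ({j | ω ∈ E j}.ncard : ℝ) = ∑ j, (E j).indicator 1 ω := by
  classical
  simp [Set.indicator_apply, Finset.sum_boole, Set.ncard_eq_toFinset_card']

namespace ProbabilityTheory

variable {Ω : Type*} [MeasurableSpace Ω] {μ : Measure Ω}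

theorem mgf_indicator_one [IsProbabilityMeasure μ] {E : Set Ω} (hE : MeasurableSet E) (t : ℝ) :
    mgf (E.indicator 1) μ t = 1 + (exp t - 1) * μ.real E := by
  have h : (fun ω => exp (t * E.indicator 1 ω)) =
      fun ω => E.indicator (fun _ => exp t - 1) ω + 1 := by
    ext ω
    by_cases hω : ω ∈ E <;> simp [hω]
  rw [mgf, h, integral_add ((integrable_const _).indicator hE) (integrable_const 1),
    integral_indicator_const _ hE, integral_const]
  simp only [smul_eq_mul, probReal_univ, mul_one]
  ring

theorem measureReal_sum_indicator_le_half_le {ι : Type*} [Fintype ι] {E : ι → Set Ω}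
    (hE : ∀ j, MeasurableSet (E j)) (hind : iIndepSet E μ) :
    μ.real {ω | ∑ j, (E j).indicator 1 ω ≤ (∑ j, μ.real (E j)) / 2} ≤
      exp (-(∑ j, μ.real (E j)) / 8) := by
  have := hind.isProbabilityMeasure
  set m := ∑ j, μ.real (E j)
  set X : ι → Ω → ℝ := fun j => (E j).indicator 1
  have hX : ∀ j, Measurable (X j) := fun j => measurable_one.indicator (hE j)
  have hXind : iIndepFun X μ := hind.iIndepFun_indicator
  have hm : 0 ≤ m := Finset.sum_nonneg fun j _ => measureReal_nonneg
  set t := -log 2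
  have ht : t ≤ 0 := neg_nonpos.mpr (log_nonneg one_le_two)
  have hmgf : mgf (∑ j, X j) μ t ≤ exp (-m / 2) := by
    rw [hXind.mgf_sum hX]
    calc ∏ j, mgf (X j) μ t = ∏ j, (1 - μ.real (E j) / 2) := by
          refine Finset.prod_congr rfl fun j _ => ?_
          rw [mgf_indicator_one (hE j), exp_neg, exp_log two_pos]
          ring
      _ ≤ ∏ j, exp (-μ.real (E j) / 2) := by
          refine Finset.prod_le_prod (fun j _ => ?_) (fun j _ => ?_)
          · linarith [measureReal_le_one (μ := μ) (s := E j)]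
          · linarith [add_one_le_exp (-μ.real (E j) / 2)]
      _ = exp (-m / 2) := by rw [← exp_sum, ← Finset.sum_div, Finset.sum_neg_distrib]
  have hint : Integrable (fun ω => exp (t * (∑ j, X j) ω)) μ := by
    refine .of_bound (by fun_prop) 1 (ae_of_all _ fun ω => ?_)
    rw [norm_of_nonneg (exp_pos _).le, exp_le_one_iff, Finset.sum_apply]
    exact mul_nonpos_of_nonpos_of_nonneg ht
      (Finset.sum_nonneg fun j _ => indicator_nonneg (fun _ _ => zero_le_one) _)
  calc μ.real {ω | ∑ j, X j ω ≤ m / 2} = μ.real {ω | (∑ j, X j) ω ≤ m / 2} := by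
        simp only [Finset.sum_apply]
    _ ≤ exp (-t * (m / 2)) * mgf (∑ j, X j) μ t := measure_le_le_exp_mul_mgf _ ht hint
    _ ≤ exp (-t * (m / 2)) * exp (-m / 2) := by gcongr
    _ ≤ exp (-m / 8) := by
        rw [← exp_add]
        gcongr
        nlinarith [log_two_lt_d9]

theorem iIndepFun.iIndepSet_preimage_inter_preimage {ι β : Type*} [MeasurableSpace β]
    {u : ι ⊕ ι → Ω → β} (hu : iIndepFun u μ) (hmeas : ∀ i, Measurable (u i))
    {F : ι ⊕ ι → Set β} (hF : ∀ i, MeasurableSet (F i)) :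
    iIndepSet (fun j => u (.inl j) ⁻¹' F (.inl j) ∩ u (.inr j) ⁻¹' F (.inr j)) μ := by
  have key : ∀ S : Finset ι,
      μ (⋂ j ∈ S, (u (.inl j) ⁻¹' F (.inl j) ∩ u (.inr j) ⁻¹' F (.inr j))) =
        ∏ j ∈ S, μ (u (.inl j) ⁻¹' F (.inl j)) * μ (u (.inr j) ⁻¹' F (.inr j)) := by
    intro S
    rw [Finset.prod_mul_distrib, ← Finset.prod_disjSum (f := fun i => μ (u i ⁻¹' F i)),
      ← hu.meas_biInter fun i _ => ⟨F i, hF i, rfl⟩]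
    congr 1
    ext ω
    simp [Finset.mem_disjSum, forall_and]
  rw [iIndepSet_iff_meas_biInter fun j => (hmeas _ (hF _)).inter (hmeas _ (hF _))]
  intro S
  rw [key S]
  refine Finset.prod_congr rfl fun j _ => ?_
  simpa using (key {j}).symm

theorem measureReal_preimage_crossingSet_inter_preimage_prioritySet {r p : Ω → ℝ}
    (hr : Measurable r) (hp : Measurable p) (hrp : IndepFun r p μ)
    (hr_unif : μ.map r = volume.restrict (Ico 0 1))
    (hp_unif : μ.map p = volume.restrict (Ico 0 1))
    {a c : ℝ} (hc : 0 ≤ c) {q ℓ : ℕ} (hℓ : 1 ≤ ℓ) (hℓq : ℓ ≤ q) :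
    μ.real (r ⁻¹' crossingSet a c ∩ p ⁻¹' prioritySet q ℓ) = min c 1 / q := by
  rw [measureReal_def, hrp.measure_inter_preimage_eq_mul _ _ (measurableSet_crossingSet a c)
      (measurableSet_prioritySet q ℓ),
    ← Measure.map_apply hr (measurableSet_crossingSet a c),
    ← Measure.map_apply hp (measurableSet_prioritySet q ℓ), hr_unif, hp_unif,
    volume_restrict_Ico_crossingSet, volume_restrict_Ico_prioritySet hℓ hℓq,
    ← ENNReal.ofReal_mul (le_min hc zero_le_one), ENNReal.toReal_ofReal (by positivity)]
  ring

end ProbabilityTheory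

theorem stmt_10_general {Ω : Type*} [MeasurableSpace Ω] (μ : Measure Ω) [IsProbabilityMeasure μ]
    (n : ℕ) (u : (Fin n ⊕ Fin n) → Ω → ℝ) (hmeas : ∀ i, Measurable (u i))
    (hindep : iIndepFun u μ)
    (hunif : ∀ i, μ.map (u i) = volume.restrict (Set.Ico (0 : ℝ) 1))
    (a c : Fin n → ℝ) (hc : ∀ j, 0 ≤ c j)
    (q : ℕ) (ℓ : ℕ) (hℓ : 1 ≤ ℓ) (hℓq : ℓ ≤ q)
    (s : ℝ) (hs : s = ∑ j, min (c j) 1) :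
    μ {ω | (Set.ncard {j : Fin n |
          ⌊(q : ℝ) * u (Sum.inr j) ω⌋ + 1 = (ℓ : ℤ) ∧
          ⌊u (Sum.inl j) ω + a j⌋ + 1 ≤ ⌊u (Sum.inl j) ω + a j + c j⌋} : ℝ) <
        s / (2 * q)} ≤ ENNReal.ofReal (Real.exp (-s / (8 * q))) := by
  set F : Fin n ⊕ Fin n → Set ℝ :=
    Sum.elim (fun j => crossingSet (a j) (c j)) fun _ => prioritySet q ℓ
  set E : Fin n → Set Ω := fun j => u (.inl j) ⁻¹' F (.inl j) ∩ u (.inr j) ⁻¹' F (.inr j)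
  have hF : ∀ i, MeasurableSet (F i) := by
    rintro (j | j)
    exacts [measurableSet_crossingSet _ _, measurableSet_prioritySet _ _]
  have hE : ∀ j, MeasurableSet (E j) := fun j => (hmeas _ (hF _)).inter (hmeas _ (hF _))
  have hprob : ∀ j, μ.real (E j) = min (c j) 1 / q := fun j =>
    measureReal_preimage_crossingSet_inter_preimage_prioritySet (hmeas _) (hmeas _)
      (hindep.indepFun Sum.inl_ne_inr) (hunif _) (hunif _) (hc j) hℓ hℓq
  have hchernoff := measureReal_sum_indicator_le_half_le hE
    (hindep.iIndepSet_preimage_inter_preimage hmeas hF)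
  rw [Finset.sum_congr rfl fun j _ => hprob j, ← Finset.sum_div, ← hs] at hchernoff
  calc _ ≤ μ {ω | ∑ j, (E j).indicator 1 ω ≤ s / q / 2} := measure_mono fun ω hω => by
        rw [mem_ofPred_eq, ← ncard_setOf_mem_eq_sum_indicator_one]
        calc ({j | ω ∈ E j}.ncard : ℝ) = _ := by congr 2; ext j; exact and_comm
          _ ≤ s / q / 2 := hω.le.trans_eq (by ring)
    _ ≤ ENNReal.ofReal (Real.exp (-s / (8 * q))) := by
        rw [show -s / (8 * q) = -(s / q) / 8 by ring,
          ENNReal.le_ofReal_iff_toReal_le (measure_ne_top _ _) (exp_pos _).le]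
        exact hchernoff

/-- Influence property, part 1: with offsets `u (inl j)` and priorities `u (inr j)` forming
`2n` mutually independent uniform `[0,1)` random variables, the number `Y` of cups of
priority level `ℓ` that cross at least one threshold satisfies
`P(Y < s/(2q)) ≤ exp(−s/(8q))`, where `s = ∑ j min (c j) 1`. -/
theorem stmt_10 {Ω : Type*} [MeasurableSpace Ω] (μ : Measure Ω) [IsProbabilityMeasure μ]
    (n : ℕ) (u : (Fin n ⊕ Fin n) → Ω → ℝ) (hmeas : ∀ i, Measurable (u i))
    (hindep : iIndepFun u μ)
    (hunif : ∀ i, μ.map (u i) = volume.restrict (Set.Ico (0 : ℝ) 1))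
    (a c : Fin n → ℝ) (ha : ∀ j, 0 ≤ a j) (hc : ∀ j, 0 ≤ c j)
    (q : ℕ) (hq : 1 ≤ q) (ℓ : ℕ) (hℓ : 1 ≤ ℓ) (hℓq : ℓ ≤ q)
    (s : ℝ) (hs : s = ∑ j, min (c j) 1) :
    μ {ω | (Set.ncard {j : Fin n |
          ⌊(q : ℝ) * u (Sum.inr j) ω⌋ + 1 = (ℓ : ℤ) ∧
          ⌊u (Sum.inl j) ω + a j⌋ + 1 ≤ ⌊u (Sum.inl j) ω + a j + c j⌋} : ℝ) <
        s / (2 * q)} ≤ ENNReal.ofReal (Real.exp (-s / (8 * q))) :=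
  stmt_10_general μ n u hmeas hindep hunif a c hc q ℓ hℓ hℓq s hs
end

section
/- Let r_1,…,r_n be independent random variables, each uniformly distributed on [0,1); let a_1,…,a_n and c_1,…,c_n be nonnegative reals; and set s = ∑_{j=1}^n min(c_j, 1). Let T = ∑_{j=1}^n (⌊r_j + a_j + c_j⌋ − ⌊r_j + a_j⌋). Then E[T] = ∑_{j=1}^n c_j, and for every δ ∈ (0,1), P(|T − ∑_{j=1}^n c_j| ≥ δ·s) ≤ 2·exp(−δ²·s/3). -/
/-!
The number of thresholds crossed by one cup is `⌊c⌋ + 1` or `⌊c⌋`, and it is 1-periodic in the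
offset, so for a uniform offset its law does not depend on `a`: the value `⌊c⌋ + 1` occurs
with probability `p = fract c`. Hence each cup has mean `c`, and its centred count has moment
generating function at most `exp (p (eᵗ - 1 - t))`. By independence these bounds multiply, with `∑ p ≤ s`, and
Chernoff's method at `t = log (1 + δ)` and at `t = -δ` bounds each tail by `exp (-δ² s / 3)`.
-/

open MeasureTheory ProbabilityTheory Set Real Int

lemma two_mul_div_two_add_le_log_one_add {x : ℝ} (hx : 0 ≤ x) :
    2 * x / (2 + x) ≤ log (1 + x) := by
  rcases hx.eq_or_lt with rfl | hx
  · simp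
  have h := le_hasSum (hasSum_log_one_add_inv (inv_pos.2 hx)) 0 fun k _ => by positivity
  rw [inv_inv] at h
  refine le_of_eq_of_le ?_ h
  simp only [CharP.cast_eq_zero, mul_zero, zero_add, pow_one]
  field_simp

lemma add_sq_div_three_le_one_add_mul_log {x : ℝ} (hx₀ : 0 ≤ x) (hx₁ : x ≤ 1) :
    x + x ^ 2 / 3 ≤ (1 + x) * log (1 + x) := by
  calc x + x ^ 2 / 3 ≤ (1 + x) * (2 * x / (2 + x)) := by
        rw [mul_div_assoc', le_div_iff₀ (by linarith)]
        nlinarith [mul_nonneg (sq_nonneg x) (sub_nonneg.2 hx₁)]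
    _ ≤ (1 + x) * log (1 + x) := by
        gcongr
        exact two_mul_div_two_add_le_log_one_add hx₀

lemma exp_neg_le_one_sub_add_sq_div_two {x : ℝ} (hx : 0 ≤ x) :
    exp (-x) ≤ 1 - x + x ^ 2 / 2 := by
  have h := quadratic_le_exp_of_nonneg hx
  rw [exp_neg, inv_le_iff_one_le_mul₀' (exp_pos x)]
  nlinarith [sq_nonneg (x ^ 2), sq_nonneg x]

lemma two_point_mgf_le (p t : ℝ) :
    (1 - p) * exp (t * -p) + p * exp (t * (1 - p)) ≤ exp (p * (exp t - 1 - t)) :=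
  calc (1 - p) * exp (t * -p) + p * exp (t * (1 - p))
      = exp (-(p * t)) * (p * (exp t - 1) + 1) := by
        rw [show t * (1 - p) = t + -(p * t) by ring, exp_add]; ring_nf
    _ ≤ exp (-(p * t)) * exp (p * (exp t - 1)) := by
        gcongr; exact add_one_le_exp _
    _ = exp (p * (exp t - 1 - t)) := by rw [← exp_add]; ring_nf

lemma Int.fract_le_self {R : Type*} [Ring R] [LinearOrder R] [IsStrictOrderedRing R]
    [FloorRing R] {x : R} (hx : 0 ≤ x) : fract x ≤ x := by
  rw [← Int.self_sub_floor, sub_le_self_iff]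
  exact_mod_cast Int.floor_nonneg.2 hx

noncomputable def crossings (a c x : ℝ) : ℤ := ⌊x + a + c⌋ - ⌊x + a⌋

lemma crossings_mem_Icc (a c x : ℝ) : crossings a c x ∈ Icc ⌊c⌋ (⌊c⌋ + 1) := by
  have h₁ := Int.le_floor_add (x + a) c
  have h₂ := Int.le_floor_add_floor (x + a) c
  constructor <;> unfold crossings <;> omega

lemma crossings_sub_self_mem_Icc (a c x : ℝ) : (crossings a c x : ℝ) - c ∈ Icc (-1) 1 := by
  obtain ⟨h₁, h₂⟩ := crossings_mem_Icc a c x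
  have h₁' : (⌊c⌋ : ℝ) ≤ crossings a c x := by exact_mod_cast h₁
  have h₂' : (crossings a c x : ℝ) ≤ ⌊c⌋ + 1 := by exact_mod_cast h₂
  constructor <;> linarith [Int.floor_le c, Int.lt_floor_add_one c]

@[fun_prop]
lemma measurable_crossings (a c : ℝ) : Measurable (crossings a c) :=
  ((measurable_id.add_const a).add_const c).floor.sub (measurable_id.add_const a).floor

lemma crossings_add_one (a c x : ℝ) : crossings a c (x + 1) = crossings a c x := by
  rw [crossings, crossings, add_right_comm x 1 a, add_right_comm (x + a) 1 c, Int.floor_add_one,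
    Int.floor_add_one]
  ring

lemma Function.Periodic.setIntegral_Ico_comp_add {E : Type*} [NormedAddCommGroup E]
    [NormedSpace ℝ E] {g : ℝ → E} {T : ℝ} (hg : Function.Periodic g T) (hT : 0 ≤ T) (a : ℝ) :
    ∫ x in Ico 0 T, g (x + a) = ∫ x in Ico 0 T, g x := by
  simp only [integral_Ico_eq_integral_Ioc, ← intervalIntegral.integral_of_le hT]
  rw [intervalIntegral.integral_comp_add_right, zero_add, add_comm T,
    hg.intervalIntegral_add_eq a 0, zero_add]

lemma setIntegral_Ico_comp_crossings (a c : ℝ) (F : ℤ → ℝ) :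
    ∫ x in Ico 0 1, F (crossings a c x) =
      (1 - fract c) * F ⌊c⌋ + fract c * F (⌊c⌋ + 1) := by
  have hshift : ∀ x, crossings a c x = crossings 0 c (x + a) := fun x => by
    simp [crossings]
  have hper : Function.Periodic (fun x => F (crossings 0 c x)) 1 := fun x => by
    simp only [crossings_add_one]
  have hβ₀ := Int.fract_nonneg c
  have hβ₁ := Int.fract_lt_one c
  have hc := Int.floor_add_fract c
  -- on `[0, 1)` the second floor vanishes and the first jumps at `1 - fract c`
  have hlow : EqOn (fun x => F (crossings 0 c x)) (fun _ => F ⌊c⌋) (Ico 0 (1 - fract c)) := by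
    rintro x ⟨hx₀, hx₁⟩
    have : ⌊x + c⌋ = ⌊c⌋ := by rw [Int.floor_eq_iff]; constructor <;> linarith
    simp [crossings, Int.floor_eq_zero_iff.2 ⟨hx₀, by linarith⟩, this]
  have hhigh :
      EqOn (fun x => F (crossings 0 c x)) (fun _ => F (⌊c⌋ + 1)) (Ico (1 - fract c) 1) := by
    rintro x ⟨hx₀, hx₁⟩
    have : ⌊x + c⌋ = ⌊c⌋ + 1 := by rw [Int.floor_eq_iff]; push_cast; constructor <;> linarith
    simp [crossings, Int.floor_eq_zero_iff.2 ⟨by linarith, hx₁⟩, this]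
  simp only [hshift]
  rw [hper.setIntegral_Ico_comp_add zero_le_one,
    ← Ico_union_Ico_eq_Ico (b := 1 - fract c) (by linarith) (by linarith),
    setIntegral_union Ico_disjoint_Ico_same measurableSet_Ico
      ((integrableOn_const (by simp)).congr_fun hlow.symm measurableSet_Ico)
      ((integrableOn_const (by simp)).congr_fun hhigh.symm measurableSet_Ico),
    setIntegral_congr_fun measurableSet_Ico hlow, setIntegral_congr_fun measurableSet_Ico hhigh,
    setIntegral_const, setIntegral_const, volume_real_Ico_of_le (by linarith),
    volume_real_Ico_of_le (by linarith)]
  simp only [smul_eq_mul]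
  ring

section Probability

variable {Ω : Type*} [MeasurableSpace Ω] {μ : Measure Ω} {R : Ω → ℝ}

lemma integral_comp_crossings (hR : Measurable R)
    (hU : μ.map R = volume.restrict (Ico 0 1)) (a c : ℝ) (F : ℤ → ℝ) :
    ∫ ω, F (crossings a c (R ω)) ∂μ = (1 - fract c) * F ⌊c⌋ + fract c * F (⌊c⌋ + 1) := by
  rw [← setIntegral_Ico_comp_crossings a c F, ← hU]
  exact (integral_map hR.aemeasurable
    (measurable_from_top.comp (measurable_crossings a c)).aestronglyMeasurable).symm

lemma integral_crossings (hR : Measurable R) (hU : μ.map R = volume.restrict (Ico 0 1))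
    (a c : ℝ) : ∫ ω, (crossings a c (R ω) : ℝ) ∂μ = c := by
  rw [integral_comp_crossings hR hU a c (fun k => (k : ℝ))]
  push_cast
  linear_combination Int.floor_add_fract c

lemma integrable_crossings [IsFiniteMeasure μ] (hR : Measurable R) (a c : ℝ) :
    Integrable (fun ω => (crossings a c (R ω) : ℝ)) μ := by
  refine .of_mem_Icc (c - 1) (c + 1) (by fun_prop) (ae_of_all _ fun ω => ?_)
  obtain ⟨h₁, h₂⟩ := crossings_sub_self_mem_Icc a c (R ω)
  constructor <;> linarith

lemma mgf_crossings_sub_le (hR : Measurable R) (hU : μ.map R = volume.restrict (Ico 0 1))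
    (a c t : ℝ) :
    mgf (fun ω => (crossings a c (R ω) : ℝ) - c) μ t ≤ exp (fract c * (exp t - 1 - t)) := by
  have h := integral_comp_crossings hR hU a c (fun k => exp (t * ((k : ℝ) - c)))
  have e₁ : (⌊c⌋ : ℝ) - c = -fract c := by rw [← Int.self_sub_floor]; ring
  have e₂ : ((⌊c⌋ + 1 : ℤ) : ℝ) - c = 1 - fract c := by
    push_cast; rw [← Int.self_sub_floor]; ring
  rw [e₁, e₂] at h
  rw [mgf, h]
  exact two_point_mgf_le _ _

lemma ProbabilityTheory.iIndepFun.mgf_sum_le {ι : Type*} [Fintype ι] {Y : ι → Ω → ℝ}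
    (h_indep : iIndepFun Y μ) (h_meas : ∀ i, Measurable (Y i)) {p : ι → ℝ} {t φ : ℝ}
    (h : ∀ i, mgf (Y i) μ t ≤ exp (p i * φ)) : mgf (∑ i, Y i) μ t ≤ exp ((∑ i, p i) * φ) := by
  rw [h_indep.mgf_sum h_meas, Finset.sum_mul, exp_sum]
  exact Finset.prod_le_prod (fun i _ => mgf_nonneg) fun i _ => h i

variable [IsFiniteMeasure μ] {Z : Ω → ℝ} {s δ : ℝ}

lemma measureReal_ge_le_of_mgf_le (hint : ∀ t, Integrable (fun ω => exp (t * Z ω)) μ)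
    (hmgf : ∀ t, mgf Z μ t ≤ exp (s * (exp t - 1 - t))) (hs : 0 ≤ s) (hδ₀ : 0 ≤ δ)
    (hδ₁ : δ ≤ 1) : μ.real {ω | δ * s ≤ Z ω} ≤ exp (-δ ^ 2 * s / 3) := by
  have hδ : 0 < 1 + δ := by linarith
  calc μ.real {ω | δ * s ≤ Z ω}
      ≤ exp (-log (1 + δ) * (δ * s)) * mgf Z μ (log (1 + δ)) :=
        measure_ge_le_exp_mul_mgf _ (log_nonneg (by linarith)) (hint _)
    _ ≤ exp (-log (1 + δ) * (δ * s)) * exp (s * (exp (log (1 + δ)) - 1 - log (1 + δ))) := by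
        gcongr; exact hmgf _
    _ = exp (s * (δ - (1 + δ) * log (1 + δ))) := by
        rw [← exp_add, exp_log hδ]; ring_nf
    _ ≤ exp (-δ ^ 2 * s / 3) :=
        exp_le_exp.2 (by nlinarith [add_sq_div_three_le_one_add_mul_log hδ₀ hδ₁])

lemma measureReal_le_neg_le_of_mgf_le (hint : ∀ t, Integrable (fun ω => exp (t * Z ω)) μ)
    (hmgf : ∀ t, mgf Z μ t ≤ exp (s * (exp t - 1 - t))) (hs : 0 ≤ s) (hδ₀ : 0 ≤ δ) :
    μ.real {ω | Z ω ≤ -(δ * s)} ≤ exp (-δ ^ 2 * s / 3) := by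
  calc μ.real {ω | Z ω ≤ -(δ * s)}
      ≤ exp (-(-δ) * -(δ * s)) * mgf Z μ (-δ) :=
        measure_le_le_exp_mul_mgf _ (by linarith) (hint _)
    _ ≤ exp (-(-δ) * -(δ * s)) * exp (s * (exp (-δ) - 1 - -δ)) := by
        gcongr; exact hmgf _
    _ = exp (s * (exp (-δ) - 1 + δ - δ ^ 2)) := by
        rw [← exp_add]; ring_nf
    _ ≤ exp (-δ ^ 2 * s / 3) :=
        exp_le_exp.2 (by nlinarith [exp_neg_le_one_sub_add_sq_div_two hδ₀])

lemma measure_abs_ge_le_of_mgf_le (hint : ∀ t, Integrable (fun ω => exp (t * Z ω)) μ)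
    (hmgf : ∀ t, mgf Z μ t ≤ exp (s * (exp t - 1 - t))) (hs : 0 ≤ s) (hδ₀ : 0 ≤ δ)
    (hδ₁ : δ ≤ 1) : μ {ω | δ * s ≤ |Z ω|} ≤ ENNReal.ofReal (2 * exp (-δ ^ 2 * s / 3)) := by
  rw [ENNReal.le_ofReal_iff_toReal_le (measure_ne_top _ _) (by positivity), ← measureReal_def]
  have hsub : {ω | δ * s ≤ |Z ω|} ⊆ {ω | δ * s ≤ Z ω} ∪ {ω | Z ω ≤ -(δ * s)} :=
    fun ω (hω : δ * s ≤ |Z ω|) => show δ * s ≤ Z ω ∨ Z ω ≤ -(δ * s) from (le_abs'.1 hω).symm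
  calc μ.real {ω | δ * s ≤ |Z ω|}
      ≤ μ.real {ω | δ * s ≤ Z ω} + μ.real {ω | Z ω ≤ -(δ * s)} :=
        (measureReal_mono hsub).trans (measureReal_union_le _ _)
    _ ≤ 2 * exp (-δ ^ 2 * s / 3) := by
        linarith [measureReal_ge_le_of_mgf_le hint hmgf hs hδ₀ hδ₁,
          measureReal_le_neg_le_of_mgf_le hint hmgf hs hδ₀]

end Probability

theorem stmt_11_general {Ω : Type*} [MeasurableSpace Ω] (μ : Measure Ω) [IsProbabilityMeasure μ]
    (n : ℕ) (r : Fin n → Ω → ℝ) (hmeas : ∀ j, Measurable (r j))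
    (hindep : iIndepFun r μ)
    (hunif : ∀ j, μ.map (r j) = volume.restrict (Set.Ico (0 : ℝ) 1))
    (a c : Fin n → ℝ) (hc : ∀ j, 0 ≤ c j)
    (s : ℝ) (hs : s = ∑ j, min (c j) 1)
    (T : Ω → ℤ) (hT : ∀ ω, T ω = ∑ j, (⌊r j ω + a j + c j⌋ - ⌊r j ω + a j⌋)) :
    (∫ ω, (T ω : ℝ) ∂μ = ∑ j, c j) ∧
      ∀ δ : ℝ, 0 < δ → δ < 1 →
        μ {ω | δ * s ≤ |(T ω : ℝ) - ∑ j, c j|} ≤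
          ENNReal.ofReal (2 * Real.exp (-δ ^ 2 * s / 3)) := by
  set g : Fin n → ℝ → ℝ := fun j x => (crossings (a j) (c j) x : ℝ) - c j
  have hg : ∀ j, Measurable (g j) := fun j => by fun_prop
  have hY : ∀ j, Measurable (g j ∘ r j) := fun j => (hg j).comp (hmeas j)
  have hTY : ∀ ω, (T ω : ℝ) - ∑ j, c j = (∑ j, g j ∘ r j) ω := fun ω => by
    simp [hT, g, crossings, Finset.sum_sub_distrib]
  refine ⟨?_, fun δ hδ₀ hδ₁ => ?_⟩
  · simp_rw [hT, Int.cast_sum]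
    rw [integral_finsetSum _ fun j _ => ?_]
    · exact Finset.sum_congr rfl fun j _ => integral_crossings (hmeas j) (hunif j) (a j) (c j)
    exact integrable_crossings (hmeas j) (a j) (c j)
  have hfract : ∑ j, fract (c j) ≤ s := hs ▸ Finset.sum_le_sum fun j _ =>
    le_min (Int.fract_le_self (hc j)) (Int.fract_lt_one _).le
  have hmgf : ∀ t, mgf (∑ j, g j ∘ r j) μ t ≤ exp (s * (exp t - 1 - t)) := fun t =>
    ((hindep.comp g hg).mgf_sum_le hY fun j =>
      mgf_crossings_sub_le (hmeas j) (hunif j) _ _ t).trans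
      (exp_le_exp.2 (mul_le_mul_of_nonneg_right hfract (by linarith [add_one_le_exp t])))
  have hint : ∀ t, Integrable (fun ω => exp (t * (∑ j, g j ∘ r j) ω)) μ := fun t =>
    (hindep.comp g hg).integrable_exp_mul_sum hY fun j _ =>
      integrable_exp_mul_of_mem_Icc (hY j).aemeasurable
        (ae_of_all _ fun ω => crossings_sub_self_mem_Icc _ _ _)
  have hs₀ : 0 ≤ s := hs ▸ Finset.sum_nonneg fun j _ => le_min (hc j) zero_le_one
  simpa only [hTY] using measure_abs_ge_le_of_mgf_le hint hmgf hs₀ hδ₀.le hδ₁.le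

/-- The total number of threshold crossings `T = ∑ j (⌊r j + a j + c j⌋ − ⌊r j + a j⌋)`
has expectation `∑ j c j`, and for `δ ∈ (0,1)` it deviates from its mean by `δ·s`
(where `s = ∑ j min (c j) 1`) with probability at most `2·exp(−δ²s/3)`. -/
theorem stmt_11 {Ω : Type*} [MeasurableSpace Ω] (μ : Measure Ω) [IsProbabilityMeasure μ]
    (n : ℕ) (r : Fin n → Ω → ℝ) (hmeas : ∀ j, Measurable (r j))
    (hindep : iIndepFun r μ)
    (hunif : ∀ j, μ.map (r j) = volume.restrict (Set.Ico (0 : ℝ) 1))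
    (a c : Fin n → ℝ) (ha : ∀ j, 0 ≤ a j) (hc : ∀ j, 0 ≤ c j)
    (s : ℝ) (hs : s = ∑ j, min (c j) 1)
    (T : Ω → ℤ) (hT : ∀ ω, T ω = ∑ j, (⌊r j ω + a j + c j⌋ - ⌊r j ω + a j⌋)) :
    (∫ ω, (T ω : ℝ) ∂μ = ∑ j, c j) ∧
      ∀ δ : ℝ, 0 < δ → δ < 1 →
        μ {ω | δ * s ≤ |(T ω : ℝ) - ∑ j, c j|} ≤
          ENNReal.ofReal (2 * Real.exp (-δ ^ 2 * s / 3)) :=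
  stmt_11_general μ n r hmeas hindep hunif a c hc s hs T hT
end

section
/- Let C ≥ 1 and N ≥ 4 be real numbers, and let (δ_ℓ)_{ℓ ≥ 1} be a sequence of nonnegative reals with δ_1 ≤ N and δ_{ℓ+1} ≤ C·√(δ_ℓ) + C for all ℓ ≥ 1. Then δ_ℓ ≤ 4C² for every integer ℓ with ℓ ≥ log₂ log₂ N + 2. -/
/-!
Iterating `x ↦ C√x + C` from `N` stays below `4C² · N^(1/2^k)`: each step halves the exponent of
`N`, and the additive `C` is absorbed because `C ≤ 2C² · N^(1/2^(k+1))`. Once `2^(2^k) ≥ N`, that is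
`k ≥ log₂ log₂ N`, the bound is at most `8C²`, and one more step brings it to `4C²`.
-/

open Real

namespace Real

theorem one_le_sqrt_iterate {x : ℝ} (hx : 1 ≤ x) (k : ℕ) : 1 ≤ sqrt^[k] x := by
  induction k with
  | zero => exact hx
  | succ k ih =>
    rw [Function.iterate_succ_apply']
    exact one_le_sqrt.mpr ih

theorem sqrt_iterate_le_of_le_pow {x y : ℝ} (hy : 0 ≤ y) (k : ℕ) (h : x ≤ y ^ 2 ^ k) :
    sqrt^[k] x ≤ y := by
  induction k generalizing x with
  | zero => simpa using h
  | succ k ih =>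
    rw [Function.iterate_succ_apply]
    apply ih
    calc √x ≤ √((y ^ 2 ^ k) ^ 2) := sqrt_le_sqrt (by rwa [← pow_mul, ← pow_succ])
      _ = y ^ 2 ^ k := sqrt_sq (by positivity)

theorem le_two_pow_two_pow_of_logb_logb_le {N : ℝ} {k : ℕ} (hN : 1 < N)
    (h : logb 2 (logb 2 N) ≤ k) : N ≤ 2 ^ 2 ^ k := by
  have hlogN : 0 < logb 2 N := logb_pos one_lt_two hN
  rw [logb_le_iff_le_rpow one_lt_two hlogN, rpow_natCast] at h
  calc N = 2 ^ logb 2 N := (rpow_logb two_pos one_lt_two.ne' (by linarith)).symm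
    _ ≤ 2 ^ ((2 ^ k : ℕ) : ℝ) := rpow_le_rpow_of_exponent_le one_le_two (by exact_mod_cast h)
    _ = 2 ^ 2 ^ k := rpow_natCast _ _

theorem mul_sqrt_le_of_le_four_mul_sq_mul {C M x : ℝ} (hC : 0 ≤ C)
    (hx : x ≤ 4 * C ^ 2 * M) : C * √x ≤ 2 * C ^ 2 * √M := by
  have hsqrt : √(4 * C ^ 2 * M) = 2 * C * √M := by
    rw [show 4 * C ^ 2 * M = (2 * C) ^ 2 * M by ring, sqrt_mul (by positivity), sqrt_sq (by positivity)]
  calc C * √x ≤ C * √(4 * C ^ 2 * M) := by gcongr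
    _ = 2 * C ^ 2 * √M := by rw [hsqrt]; ring

end Real

theorem le_four_mul_sq_mul_sqrt_iterate {C N : ℝ} {δ : ℕ → ℝ} (hC : 1 ≤ C) (hN : 1 ≤ N)
    (h1 : δ 1 ≤ N) (hrec : ∀ ℓ : ℕ, 1 ≤ ℓ → δ (ℓ + 1) ≤ C * √(δ ℓ) + C) (k : ℕ) :
    δ (k + 1) ≤ 4 * C ^ 2 * sqrt^[k] N := by
  induction k with
  | zero => simpa using h1.trans (le_mul_of_one_le_left (by linarith) (by nlinarith))
  | succ k ih =>
    have hM : 1 ≤ √(sqrt^[k] N) := one_le_sqrt.mpr (one_le_sqrt_iterate hN k)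
    calc δ (k + 1 + 1) ≤ C * √(δ (k + 1)) + C := hrec (k + 1) (by omega)
      _ ≤ 2 * C ^ 2 * √(sqrt^[k] N) + C := by
        linarith [mul_sqrt_le_of_le_four_mul_sq_mul (by linarith) ih]
      _ ≤ 4 * C ^ 2 * sqrt^[k + 1] N := by
        rw [Function.iterate_succ_apply']
        nlinarith

theorem stmt_12_general (C N : ℝ) (hC : 1 ≤ C) (hN : 4 ≤ N)
    (δ : ℕ → ℝ) (h1 : δ 1 ≤ N)
    (hrec : ∀ ℓ : ℕ, 1 ≤ ℓ → δ (ℓ + 1) ≤ C * Real.sqrt (δ ℓ) + C) :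
    ∀ ℓ : ℕ, Real.logb 2 (Real.logb 2 N) + 2 ≤ (ℓ : ℝ) → δ ℓ ≤ 4 * C ^ 2 := by
  intro ℓ hℓ
  have hlogN : 1 ≤ logb 2 N := (le_logb_iff_rpow_le one_lt_two (by linarith)).mpr (by norm_num; linarith)
  have hℓ2 : 2 ≤ ℓ := by
    have := logb_nonneg one_lt_two hlogN
    exact_mod_cast (show (2 : ℝ) ≤ ℓ by linarith)
  obtain ⟨k, rfl⟩ : ∃ k, ℓ = k + 1 + 1 := ⟨ℓ - 2, by omega⟩
  have hk : logb 2 (logb 2 N) ≤ k := by push_cast at hℓ; linarith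
  have hM : sqrt^[k] N ≤ 2 :=
    sqrt_iterate_le_of_le_pow zero_le_two k (le_two_pow_two_pow_of_logb_logb_le (by linarith) hk)
  have hsqrtM : √(sqrt^[k] N) ≤ 3 / 2 := sqrt_le_iff.mpr ⟨by norm_num, by linarith⟩
  calc δ (k + 1 + 1) ≤ C * √(δ (k + 1)) + C := hrec (k + 1) (by omega)
    _ ≤ 2 * C ^ 2 * √(sqrt^[k] N) + C := by
      linarith [mul_sqrt_le_of_le_four_mul_sq_mul (by linarith)
        (le_four_mul_sq_mul_sqrt_iterate hC (by linarith) h1 hrec k)]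
    _ ≤ 4 * C ^ 2 := by nlinarith

/-- The recursion underlying the unpredictability analysis: a nonnegative sequence with
`δ 1 ≤ N` and `δ (ℓ+1) ≤ C√(δ ℓ) + C` collapses to `4C²` within `log₂ log₂ N + 2` levels. -/
theorem stmt_12 (C N : ℝ) (hC : 1 ≤ C) (hN : 4 ≤ N)
    (δ : ℕ → ℝ) (hnonneg : ∀ ℓ, 0 ≤ δ ℓ) (h1 : δ 1 ≤ N)
    (hrec : ∀ ℓ : ℕ, 1 ≤ ℓ → δ (ℓ + 1) ≤ C * Real.sqrt (δ ℓ) + C) :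
    ∀ ℓ : ℕ, Real.logb 2 (Real.logb 2 N) + 2 ≤ (ℓ : ℝ) → δ ℓ ≤ 4 * C ^ 2 :=
  stmt_12_general C N hC hN δ h1 hrec
end

section
/- Fix n ≥ 1 and 0 < ε < 1, initial fills g_0 with 0 ≤ g_0(j) < 1 for every cup j, and any filling sequence and any emptier choices as in the context. Then among any ⌊n/ε⌋ + 1 consecutive steps, at least one step is a rest step. -/
/-!
Every step that is not a rest step removes one unit while the filler adds at most `1 - ε`,
so it lowers the total fill by at least `ε`. The total fill is nonnegative and never exceeds `n`
(it can only grow at a rest step, after which every cup is below `1`). Hence `⌊n/ε⌋ + 1`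
consecutive non-rest steps would lower it by `(⌊n/ε⌋ + 1) ε > n`, which is impossible.
-/

open Finset Function

/-- `g`, `a`, `g'` stand for `g_{t-1}`, `f_t`, `g_t`. -/
def CupGameStep {ι : Type*} [DecidableEq ι] (g a g' : ι → ℝ) : Prop :=
  (∃ j, 1 ≤ g j + a j ∧ g' = update (fun i => g i + a i) j (g j + a j - 1)) ∨
    ((∀ j, g j + a j < 1) ∧ g' = fun i => g i + a i)

lemma sum_update_sub_one {ι : Type*} [Fintype ι] [DecidableEq ι] (h : ι → ℝ) (j : ι) :
    ∑ i, update h j (h j - 1) i = ∑ i, h i - 1 := by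
  rw [sum_update_of_mem (mem_univ j), ← add_sum_erase univ h (mem_univ j),
    sdiff_singleton_eq_erase]
  ring

lemma le_sub_mul_of_forall_succ_le_sub {a : ℕ → ℝ} {ε : ℝ} {p m : ℕ}
    (h : ∀ i < m, a (p + i + 1) ≤ a (p + i) - ε) : a (p + m) ≤ a p - m * ε := by
  induction m with
  | zero => simp
  | succ m ih =>
    have := h m m.lt_succ_self
    have := ih fun i hi => h i (hi.trans m.lt_succ_self)
    rw [← add_assoc]
    push_cast
    linarith

lemma lt_floor_div_add_one_mul (x : ℝ) {ε : ℝ} (hε : 0 < ε) : x < (⌊x / ε⌋₊ + 1) * ε :=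
  (div_lt_iff₀ hε).mp (Nat.lt_floor_add_one _)

namespace CupGameStep

variable {ι : Type*} [DecidableEq ι] {g a g' : ι → ℝ}

lemma nonneg (h : CupGameStep g a g') (hg : 0 ≤ g) (ha : 0 ≤ a) : 0 ≤ g' := by
  intro i
  rcases h with ⟨j, hj, rfl⟩ | ⟨-, rfl⟩
  · rcases eq_or_ne i j with rfl | hij
    · simpa using hj
    · simpa [update_of_ne hij] using add_nonneg (hg i) (ha i)
  · exact add_nonneg (hg i) (ha i)

variable [Fintype ι]

lemma sum_eq_of_exists_one_le (h : CupGameStep g a g') (hfull : ∃ j, 1 ≤ g j + a j) :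
    ∑ i, g' i = ∑ i, g i + ∑ i, a i - 1 := by
  rcases h with ⟨j, -, rfl⟩ | ⟨hrest, -⟩
  · rw [sum_update_sub_one (fun i => g i + a i), sum_add_distrib]
  · obtain ⟨j, hj⟩ := hfull
    exact absurd (hrest j) hj.not_gt

lemma sum_le_card (h : CupGameStep g a g') (hg : ∑ i, g i ≤ Fintype.card ι)
    (ha : ∑ i, a i ≤ 1) : ∑ i, g' i ≤ Fintype.card ι := by
  by_cases hfull : ∃ j, 1 ≤ g j + a j
  · rw [h.sum_eq_of_exists_one_le hfull]
    linarith
  · push Not at hfull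
    rcases h with ⟨j, hj, -⟩ | ⟨-, rfl⟩
    · exact absurd hj (hfull j).not_ge
    · simpa using sum_le_sum fun i (_ : i ∈ univ) => (hfull i).le

end CupGameStep

theorem stmt_13_general (n : ℕ) (ε : ℝ) (hε0 : 0 < ε)
    (f : ℕ → Fin n → ℝ) (g : ℕ → Fin n → ℝ)
    (hg0 : ∀ j, 0 ≤ g 0 j ∧ g 0 j < 1)
    (hf : ∀ t j, 0 ≤ f t j) (hfsum : ∀ t, ∑ j, f t j ≤ 1 - ε)
    (hstep : ∀ t : ℕ, 1 ≤ t →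
      (∃ j : Fin n, 1 ≤ g (t - 1) j + f t j ∧
        g t = Function.update (fun i => g (t - 1) i + f t i) j (g (t - 1) j + f t j - 1)) ∨
      ((∀ j, g (t - 1) j + f t j < 1) ∧ g t = fun i => g (t - 1) i + f t i)) :
    ∀ s : ℕ, 1 ≤ s → ∃ t : ℕ, s ≤ t ∧ t ≤ s + ⌊(n : ℝ) / ε⌋₊ ∧
      ∀ j, g (t - 1) j + f t j < 1 := by
  have step (t : ℕ) : CupGameStep (g t) (f (t + 1)) (g (t + 1)) := by
    have := hstep (t + 1) (by omega)
    rw [Nat.add_sub_cancel] at this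
    exact this
  have nonneg (t : ℕ) : 0 ≤ g t := by
    induction t with
    | zero => exact fun j => (hg0 j).1
    | succ t ih => exact (step t).nonneg ih (hf _)
  have sum_le (t : ℕ) : ∑ j, g t j ≤ n := by
    induction t with
    | zero => simpa using sum_le_sum fun j (_ : j ∈ univ) => (hg0 j).2.le
    | succ t ih =>
      simpa using (step t).sum_le_card (by simpa using ih) (by linarith [hfsum (t + 1)])
  intro s hs
  obtain ⟨p, rfl⟩ : ∃ p, s = p + 1 := ⟨s - 1, by omega⟩
  by_contra! hfull
  have descent := le_sub_mul_of_forall_succ_le_sub (a := fun t => ∑ j, g t j) (ε := ε) (p := p)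
    (m := ⌊(n : ℝ) / ε⌋₊ + 1) fun i hi => by
      have hfull := hfull (p + i + 1) (by omega) (by omega)
      rw [Nat.add_sub_cancel] at hfull
      rw [(step (p + i)).sum_eq_of_exists_one_le hfull]
      linarith [hfsum (p + i + 1)]
  push_cast at descent
  linarith [lt_floor_div_add_one_mul (n : ℝ) hε0, sum_le p,
    sum_nonneg fun j (_ : j ∈ univ) => nonneg (p + (⌊(n : ℝ) / ε⌋₊ + 1)) j]

/-- Single-processor cup game on `n` cups with resource augmentation `ε`:
among any `⌊n/ε⌋ + 1` consecutive steps, at least one step is a rest step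
(i.e. a step at which every cup has fill `< 1` after the filler's move). -/
theorem stmt_13 (n : ℕ) (hn : 1 ≤ n) (ε : ℝ) (hε0 : 0 < ε) (hε1 : ε < 1)
    (f : ℕ → Fin n → ℝ) (g : ℕ → Fin n → ℝ)
    (hg0 : ∀ j, 0 ≤ g 0 j ∧ g 0 j < 1)
    (hf : ∀ t j, 0 ≤ f t j) (hfsum : ∀ t, ∑ j, f t j ≤ 1 - ε)
    (hstep : ∀ t : ℕ, 1 ≤ t →
      (∃ j : Fin n, 1 ≤ g (t - 1) j + f t j ∧
        g t = Function.update (fun i => g (t - 1) i + f t i) j (g (t - 1) j + f t j - 1)) ∨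
      ((∀ j, g (t - 1) j + f t j < 1) ∧ g t = fun i => g (t - 1) i + f t i)) :
    ∀ s : ℕ, 1 ≤ s → ∃ t : ℕ, s ≤ t ∧ t ≤ s + ⌊(n : ℝ) / ε⌋₊ ∧
      ∀ j, g (t - 1) j + f t j < 1 :=
  stmt_13_general n ε hε0 f g hg0 hf hfsum hstep
end

section
/- Let n ≥ 2 and 1 ≤ m ≤ n be integers. Let A_1,…,A_{2n} be independent random variables, each uniformly distributed on {1,…,n}. For j ∈ {1,…,m}, let a_j = (1/2)·#{i : A_i = j}, and let d_1,…,d_m be fixed real numbers. Let F = (1/2)·#{j ∈ {1,…,m} : a_j − d_j is not an integer}. Then P(F < m/64) ≤ exp(−m²/(4096·n)). -/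
/-!
`F` is a function of the `2n` independent uniform choices which changes by at most `1` when a
single choice is altered (only two cups are affected). The bounded-differences inequality, proved
on the uniform cube by peeling off one coordinate at a time with Hoeffding's lemma, bounds its
lower tail at distance `δ` below the mean by `exp (-δ² / (4n))`. The mean is at least `31m/128`:
whether `a_j - d_j` is an integer depends only on the parity of the number of hits of cup `j`, and
each parity class has probability at most `(1 + (1 - 2/n)^(2n)) / 2 ≤ 33/64`, because the sum of
`(-1)^(hits of j)` over all choices is `(n - 2)^(2n) ≤ n^(2n) e⁻⁴`.
-/

open MeasureTheory ProbabilityTheory Real Finset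
open scoped BigOperators ENNReal

def HasBoundedDifferences {ι α : Type*} (f : (ι → α) → ℝ) (c : ℝ) : Prop :=
  ∀ i x y, (∀ j, j ≠ i → x j = y j) → f x - f y ≤ c

section BoundedDifferences

variable {α : Type*} [Fintype α]

theorem expect_pi_fin_succ {k : ℕ} (f : (Fin (k + 1) → α) → ℝ) :
    𝔼 x, f x = 𝔼 y : Fin k → α, 𝔼 a, f (Fin.cons a y) := by
  rw [Fintype.expect_equiv (Fin.consEquiv fun _ ↦ α).symm f (fun p ↦ f (Fin.cons p.1 p.2))
    (fun x ↦ by simp), ← univ_product_univ, expect_product' univ univ fun a y ↦ f (Fin.cons a y),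
    expect_comm]

variable [Nonempty α]

theorem expect_exp_mul_le_of_abs_le {g : α → ℝ} {c : ℝ} (hg : ∀ a, |g a| ≤ c)
    (hmean : 𝔼 a, g a = 0) (t : ℝ) : 𝔼 a, exp (t * g a) ≤ exp (t ^ 2 * c ^ 2 / 2) := by
  obtain ⟨a₀⟩ := ‹Nonempty α›
  rcases ((abs_nonneg _).trans (hg a₀)).eq_or_lt with rfl | hc
  · simp [fun a ↦ abs_nonpos_iff.mp (hg a)]
  have hchord : ∀ a, exp (t * g a) ≤
      (c - g a) / (2 * c) * exp (-(t * c)) + (c + g a) / (2 * c) * exp (t * c) := by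
    intro a
    obtain ⟨hlo, hhi⟩ := abs_le.mp (hg a)
    have hθ₁ : 0 ≤ (c - g a) / (2 * c) := div_nonneg (by linarith) (by positivity)
    have hθ₂ : 0 ≤ (c + g a) / (2 * c) := div_nonneg (by linarith) (by positivity)
    have h := convexOn_exp.2 (Set.mem_univ (-(t * c))) (Set.mem_univ (t * c)) hθ₁ hθ₂
      (by field_simp; ring)
    simp only [smul_eq_mul] at h
    refine Eq.trans_le ?_ h
    congr 1
    field_simp
    ring
  calc 𝔼 a, exp (t * g a)
      ≤ 𝔼 a, ((c - g a) / (2 * c) * exp (-(t * c)) + (c + g a) / (2 * c) * exp (t * c)) :=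
        expect_le_expect fun a _ ↦ hchord a
    _ = cosh (t * c) := by
        simp only [sub_div, add_div, sub_mul, add_mul, expect_add_distrib, expect_sub_distrib,
          ← expect_mul, ← expect_div, hmean, Fintype.expect_const, cosh_eq]
        field_simp
        ring
    _ ≤ exp (t ^ 2 * c ^ 2 / 2) := by
        simpa [mul_pow] using cosh_le_exp_half_sq (t * c)

theorem HasBoundedDifferences.expect_exp_mul_le {k : ℕ} {f : (Fin k → α) → ℝ} {c : ℝ}
    (hf : HasBoundedDifferences f c) (t : ℝ) :
    𝔼 x, exp (t * f x) ≤ exp (t * 𝔼 x, f x + t ^ 2 * c ^ 2 * k / 2) := by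
  induction k with
  | zero => simp
  | succ k ih =>
    set g : (Fin k → α) → ℝ := fun y ↦ 𝔼 a, f (Fin.cons a y)
    have hcons : ∀ a b y, f (Fin.cons a y) - f (Fin.cons b y) ≤ c := fun a b y ↦
      hf 0 _ _ fun j hj ↦ by
        obtain ⟨j, rfl⟩ := Fin.exists_succ_eq.mpr hj
        simp
    have hg : HasBoundedDifferences g c := fun i y y' hyy ↦ by
      rw [← expect_sub_distrib]
      refine expect_le univ_nonempty fun a _ ↦ hf i.succ _ _ fun j hj ↦ ?_
      induction j using Fin.cases with
      | zero => simp
      | succ j => simpa using hyy j (by rintro rfl; exact hj rfl)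
    have hdev : ∀ y a, |f (Fin.cons a y) - g y| ≤ c := fun y a ↦ by
      have hsub : f (Fin.cons a y) - g y = 𝔼 b, (f (Fin.cons a y) - f (Fin.cons b y)) := by
        rw [expect_sub_distrib, Fintype.expect_const]
      rw [hsub, abs_le]
      exact ⟨le_expect univ_nonempty fun b _ ↦ by linarith [hcons b a y],
        expect_le univ_nonempty fun b _ ↦ hcons a b y⟩
    have hcentered : ∀ y, 𝔼 a, (f (Fin.cons a y) - g y) = 0 := fun y ↦ by
      rw [expect_sub_distrib, Fintype.expect_const, sub_self]
    calc 𝔼 x, exp (t * f x)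
        = 𝔼 y, exp (t * g y) * 𝔼 a, exp (t * (f (Fin.cons a y) - g y)) := by
          rw [expect_pi_fin_succ]
          refine expect_congr rfl fun y _ ↦ ?_
          rw [mul_expect]
          refine expect_congr rfl fun a _ ↦ ?_
          rw [← exp_add]
          ring_nf
      _ ≤ 𝔼 y, exp (t * g y) * exp (t ^ 2 * c ^ 2 / 2) :=
          expect_le_expect fun y _ ↦ mul_le_mul_of_nonneg_left
            (expect_exp_mul_le_of_abs_le (hdev y) (hcentered y) t) (exp_nonneg _)
      _ ≤ exp (t * 𝔼 y, g y + t ^ 2 * c ^ 2 * k / 2) * exp (t ^ 2 * c ^ 2 / 2) := by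
          rw [← expect_mul]
          exact mul_le_mul_of_nonneg_right (ih hg) (exp_nonneg _)
      _ = exp (t * 𝔼 x, f x + t ^ 2 * c ^ 2 * ↑(k + 1) / 2) := by
          rw [← exp_add, ← (expect_pi_fin_succ f : 𝔼 x, f x = 𝔼 y, g y)]
          push_cast
          ring_nf

theorem HasBoundedDifferences.card_lt_div_le {k : ℕ} {f : (Fin k → α) → ℝ} {c : ℝ}
    (hf : HasBoundedDifferences f c) {s : ℝ} (hs : s ≤ 𝔼 x, f x) :
    (#{x | f x < s} : ℝ) / Fintype.card α ^ k ≤ exp (-(𝔼 x, f x - s) ^ 2 / (2 * (k * c ^ 2))) := by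
  set δ := 𝔼 x, f x - s
  set D := k * c ^ 2
  -- Chernoff's bound at the optimal parameter `t = δ / D` (which is `0` when `D = 0`)
  set t := δ / D
  have ht : 0 ≤ t := div_nonneg (sub_nonneg.mpr hs) (by positivity)
  have hopt : -(t * δ) + t ^ 2 * D / 2 = -δ ^ 2 / (2 * D) := by
    rcases eq_or_ne D 0 with hD | hD
    · simp [t, hD]
    · simp only [t]
      field_simp
      ring
  calc (#{x | f x < s} : ℝ) / Fintype.card α ^ k
      = 𝔼 x, if f x < s then (1 : ℝ) else 0 := by
        rw [Fintype.expect_eq_sum_div_card, sum_boole, Fintype.card_fun, Fintype.card_fin]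
        push_cast
        rfl
    _ ≤ 𝔼 x, exp (t * s) * exp (-t * f x) :=
        expect_le_expect fun x _ ↦ by
          rw [← exp_add]
          split_ifs with hx
          · exact one_le_exp (by nlinarith)
          · exact exp_nonneg _
    _ ≤ exp (t * s) * exp (-t * 𝔼 x, f x + (-t) ^ 2 * c ^ 2 * k / 2) := by
        rw [← mul_expect]
        exact mul_le_mul_of_nonneg_left (hf.expect_exp_mul_le (-t)) (exp_nonneg _)
    _ = exp (-δ ^ 2 / (2 * D)) := by
        rw [← exp_add, ← hopt]
        simp only [δ, D]
        ring_nf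

end BoundedDifferences

theorem ProbabilityTheory.iIndepFun.measure_tuple_mem_le {Ω ι α : Type*} [MeasurableSpace Ω]
    {μ : Measure Ω} [Fintype ι] [Fintype α] [Nonempty α] [MeasurableSpace α]
    [MeasurableSingletonClass α] {A : ι → Ω → α} (hindep : iIndepFun A μ)
    (hunif : ∀ i a, μ {ω | A i ω = a} = (Fintype.card α : ℝ≥0∞)⁻¹)
    (S : Finset (ι → α)) :
    μ {ω | (fun i ↦ A i ω) ∈ S} ≤
      ENNReal.ofReal (#S / Fintype.card α ^ Fintype.card ι) := by
  have hcyl : ∀ x : ι → α, μ (⋂ i, A i ⁻¹' {x i}) = (Fintype.card α : ℝ≥0∞)⁻¹ ^ Fintype.card ι :=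
    fun x ↦ by
      rw [hindep.meas_iInter fun i ↦ ⟨{x i}, measurableSet_singleton _, rfl⟩]
      simp [Set.preimage, hunif]
  have hunion : {ω | (fun i ↦ A i ω) ∈ S} = ⋃ x ∈ S, ⋂ i, A i ⁻¹' {x i} := by
    ext ω
    simp only [Set.mem_ofPred_eq, Set.mem_iUnion, Set.mem_iInter, Set.mem_preimage,
      Set.mem_singleton_iff, exists_prop]
    exact ⟨fun h ↦ ⟨_, h, fun _ ↦ rfl⟩, by rintro ⟨x, hx, hAx⟩; rwa [funext hAx]⟩
  calc μ {ω | (fun i ↦ A i ω) ∈ S}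
      ≤ ∑ x ∈ S, μ (⋂ i, A i ⁻¹' {x i}) := hunion ▸ measure_biUnion_finset_le S _
    _ = ENNReal.ofReal (#S / Fintype.card α ^ Fintype.card ι) := by
        rw [sum_congr rfl fun x _ ↦ hcyl x, sum_const, nsmul_eq_mul, div_eq_mul_inv,
          ENNReal.ofReal_mul (by positivity), ← inv_pow,
          ENNReal.ofReal_pow (by positivity), ENNReal.ofReal_inv_of_pos (by positivity)]
        simp

section Fibers

variable {ι α : Type*} [Fintype ι] [DecidableEq α]

def fiberCard (x : ι → α) (a : α) : ℕ := #{i | x i = a}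

theorem fiberCard_eq_ncard (x : ι → α) (a : α) : fiberCard x a = Set.ncard {i | x i = a} := by
  rw [fiberCard, ← Set.ncard_coe_finset, coe_filter]
  simp

theorem fiberCard_eq_of_eq_off {x y : ι → α} {i : ι} (hxy : ∀ j, j ≠ i → x j = y j) {a : α}
    (hx : x i ≠ a) (hy : y i ≠ a) : fiberCard x a = fiberCard y a := by
  unfold fiberCard
  congr 1
  refine filter_congr fun j _ ↦ ?_
  by_cases hj : j = i
  · subst hj
    simp [hx, hy]
  · rw [hxy j hj]

variable [DecidableEq ι] [Fintype α]

theorem sum_neg_one_pow_fiberCard (a : α) :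
    ∑ x : ι → α, (-1 : ℝ) ^ fiberCard x a = ((Fintype.card α : ℝ) - 2) ^ Fintype.card ι := by
  have hsign : ∀ x : ι → α, (-1 : ℝ) ^ fiberCard x a = ∏ i, if x i = a then -1 else 1 :=
    fun x ↦ by simp [prod_ite, fiberCard]
  have hsum : ∑ b : α, (if b = a then (-1 : ℝ) else 1) = Fintype.card α - 2 := by
    rw [sum_congr rfl fun b _ ↦ (by split_ifs <;> norm_num :
      (if b = a then (-1 : ℝ) else 1) = 1 - if b = a then 2 else 0)]
    simp [sum_sub_distrib]
  simp_rw [hsign, ← Fintype.prod_sum (fun (_ : ι) b ↦ if b = a then (-1 : ℝ) else 1), hsum,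
    prod_const, card_univ]

theorem card_even_fiberCard_sub_card_odd (a : α) :
    (#{x : ι → α | Even (fiberCard x a)} : ℝ) - #{x : ι → α | ¬Even (fiberCard x a)} =
      ((Fintype.card α : ℝ) - 2) ^ Fintype.card ι := by
  rw [← sum_neg_one_pow_fiberCard a,
    ← sum_filter_add_sum_filter_not univ fun x ↦ Even (fiberCard x a),
    sum_congr rfl fun x hx ↦ (mem_filter.mp hx).2.neg_one_pow,
    sum_congr rfl fun x hx ↦ (Nat.not_even_iff_odd.mp (mem_filter.mp hx).2).neg_one_pow]
  simp [sub_eq_add_neg]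

end Fibers

theorem even_iff_even_of_half_sub_eq_intCast {c c' : ℕ} {d : ℝ} {z z' : ℤ}
    (h : (1 / 2 : ℝ) * c - d = z) (h' : (1 / 2 : ℝ) * c' - d = z') : Even c ↔ Even c' := by
  have hdiff : (c : ℤ) = c' + 2 * (z - z') := by
    exact_mod_cast (by linarith : (c : ℝ) = c' + 2 * (z - z'))
  rw [← Int.even_coe_nat, hdiff, Int.even_add, ← Int.even_coe_nat c']
  simp

theorem card_filter_le_max_of_even_iff_even {β : Type*} [Fintype β] (p : β → Prop)
    [DecidablePred p] (c : β → ℕ) (h : ∀ x y, p x → p y → (Even (c x) ↔ Even (c y))) :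
    #{x | p x} ≤ max #{x | Even (c x)} #{x | ¬Even (c x)} := by
  by_cases hp : ∃ x₀, p x₀
  · obtain ⟨x₀, hx₀⟩ := hp
    by_cases he : Even (c x₀)
    · refine le_max_of_le_left (card_le_card fun x hx ↦ ?_)
      simp only [mem_filter, mem_univ, true_and]
      rwa [h x x₀ (mem_filter.mp hx).2 hx₀]
    · refine le_max_of_le_right (card_le_card fun x hx ↦ ?_)
      simp only [mem_filter, mem_univ, true_and]
      rwa [h x x₀ (mem_filter.mp hx).2 hx₀]
  · simp [filter_false_of_mem fun x _ hx ↦ hp ⟨x, hx⟩]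

theorem sub_two_pow_two_mul_le {n : ℕ} (hn : 2 ≤ n) :
    ((n : ℝ) - 2) ^ (2 * n) ≤ (n : ℝ) ^ (2 * n) / 32 := by
  have hexp : exp (-4) ≤ 1 / 32 := by
    have h := pow_le_pow_left₀ (by norm_num) exp_one_gt_d9.le 4
    rw [exp_one_pow] at h
    rw [exp_neg, inv_le_comm₀ (exp_pos _) (by norm_num)]
    norm_num at h ⊢
    linarith
  have hn' : (2 : ℝ) ≤ n := by exact_mod_cast hn
  have hsub : (n : ℝ) - 2 = n * (1 - 4 / ((2 * n : ℕ) : ℝ)) := by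
    push_cast
    field_simp
    ring
  calc ((n : ℝ) - 2) ^ (2 * n) = (n : ℝ) ^ (2 * n) * (1 - 4 / ((2 * n : ℕ) : ℝ)) ^ (2 * n) := by
        rw [hsub, mul_pow]
    _ ≤ (n : ℝ) ^ (2 * n) * exp (-4) :=
        mul_le_mul_of_nonneg_left (one_sub_div_pow_le_exp_neg (by push_cast; linarith))
          (by positivity)
    _ ≤ (n : ℝ) ^ (2 * n) / 32 := by
        rw [div_eq_mul_one_div]
        exact mul_le_mul_of_nonneg_left hexp (by positivity)

theorem max_card_parity_fiberCard_le {n : ℕ} (hn : 2 ≤ n) (a : Fin n) :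
    ((max #{x : Fin (2 * n) → Fin n | Even (fiberCard x a)}
      #{x : Fin (2 * n) → Fin n | ¬Even (fiberCard x a)} : ℕ) : ℝ) ≤
      33 / 64 * (n : ℝ) ^ (2 * n) := by
  have hsum : (#{x : Fin (2 * n) → Fin n | Even (fiberCard x a)} : ℝ) +
      #{x : Fin (2 * n) → Fin n | ¬Even (fiberCard x a)} = (n : ℝ) ^ (2 * n) := by
    rw [← Nat.cast_add, card_filter_add_card_filter_not]
    simp
  have hdiff := card_even_fiberCard_sub_card_odd (ι := Fin (2 * n)) a
  simp only [Fintype.card_fin] at hdiff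
  have hsmall := sub_two_pow_two_mul_le hn
  have hnonneg : 0 ≤ ((n : ℝ) - 2) ^ (2 * n) := by
    rw [pow_mul]
    positivity
  rw [Nat.cast_max, max_le_iff]
  constructor <;> linarith

open Classical in
theorem card_not_exists_half_fiberCard_sub_eq_intCast {n : ℕ} (hn : 2 ≤ n) (a : Fin n) (d : ℝ) :
    31 / 64 * (n : ℝ) ^ (2 * n) ≤
      #{x : Fin (2 * n) → Fin n | ¬∃ z : ℤ, (1 / 2 : ℝ) * fiberCard x a - d = z} := by
  have haligned := card_filter_le_max_of_even_iff_even
    (fun x : Fin (2 * n) → Fin n ↦ ∃ z : ℤ, (1 / 2 : ℝ) * fiberCard x a - d = z)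
    (fun x ↦ fiberCard x a) fun x y ⟨z, hz⟩ ⟨z', hz'⟩ ↦
      even_iff_even_of_half_sub_eq_intCast (c := fiberCard x a) (c' := fiberCard y a) hz hz'
  have hsum : (#{x : Fin (2 * n) → Fin n | ∃ z : ℤ, (1 / 2 : ℝ) * fiberCard x a - d = z} : ℝ) +
      #{x : Fin (2 * n) → Fin n | ¬∃ z : ℤ, (1 / 2 : ℝ) * fiberCard x a - d = z} =
      (n : ℝ) ^ (2 * n) := by
    rw [← Nat.cast_add, card_filter_add_card_filter_not]
    simp
  linarith [(Nat.cast_le (α := ℝ)).mpr haligned, max_card_parity_fiberCard_le hn a]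

section MisalignedCups

variable {k n : ℕ}

open Classical in
noncomputable def misalignedCups (m : ℕ) (d : Fin n → ℝ) (x : Fin k → Fin n) : Finset (Fin n) :=
  {j | (j : ℕ) < m ∧ ¬∃ z : ℤ, (1 / 2 : ℝ) * fiberCard x j - d j = z}

theorem hasBoundedDifferences_misalignedCups (m : ℕ) (d : Fin n → ℝ) :
    HasBoundedDifferences (fun x : Fin k → Fin n ↦ (1 / 2 : ℝ) * #(misalignedCups m d x)) 1 := by
  intro i x y hxy
  have hsub : misalignedCups m d x ⊆ insert (x i) (insert (y i) (misalignedCups m d y)) := by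
    intro j hj
    by_cases hjx : x i = j
    · simp [hjx]
    by_cases hjy : y i = j
    · simp [hjy]
    simp only [misalignedCups, mem_filter, mem_univ, true_and, mem_insert] at hj ⊢
    rw [← fiberCard_eq_of_eq_off hxy hjx hjy]
    exact Or.inr (Or.inr hj)
  have hcard : #(misalignedCups m d x) ≤ #(misalignedCups m d y) + 2 := by
    have := card_le_card hsub
    have := card_insert_le (x i) (insert (y i) (misalignedCups m d y))
    have := card_insert_le (y i) (misalignedCups m d y)
    omega
  have : (#(misalignedCups m d x) : ℝ) ≤ #(misalignedCups m d y) + 2 := by exact_mod_cast hcard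
  linarith

open Classical in
theorem sum_card_misalignedCups (m : ℕ) (d : Fin n → ℝ) :
    ∑ x : Fin k → Fin n, #(misalignedCups m d x) =
      ∑ j ∈ {j : Fin n | (j : ℕ) < m}, #{x : Fin k → Fin n | ¬∃ z : ℤ,
        (1 / 2 : ℝ) * fiberCard x j - d j = z} := by
  convert sum_card_bipartiteAbove_eq_sum_card_bipartiteBelow
    (fun (x : Fin k → Fin n) j ↦ ¬∃ z : ℤ, (1 / 2 : ℝ) * fiberCard x j - d j = z) using 2
  · simp [misalignedCups, bipartiteAbove, filter_filter]
  · simp [bipartiteBelow]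

theorem le_expect_misalignedCups {m : ℕ} (hn : 2 ≤ n) (hmn : m ≤ n) (d : Fin n → ℝ) :
    31 / 128 * (m : ℝ) ≤ 𝔼 x : Fin (2 * n) → Fin n, (1 / 2 : ℝ) * #(misalignedCups m d x) := by
  classical
  have hN : (0 : ℝ) < (n : ℝ) ^ (2 * n) := by positivity
  have hsum : m * (31 / 64 * (n : ℝ) ^ (2 * n)) ≤
      ∑ x : Fin (2 * n) → Fin n, (#(misalignedCups m d x) : ℝ) := by
    calc m * (31 / 64 * (n : ℝ) ^ (2 * n))
        = ∑ _j ∈ {j : Fin n | (j : ℕ) < m}, 31 / 64 * (n : ℝ) ^ (2 * n) := by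
          rw [sum_const, Fin.card_filter_val_lt, min_eq_right hmn, nsmul_eq_mul]
      _ ≤ ∑ j ∈ {j : Fin n | (j : ℕ) < m}, (#{x : Fin (2 * n) → Fin n | ¬∃ z : ℤ,
            (1 / 2 : ℝ) * fiberCard x j - d j = z} : ℝ) :=
          sum_le_sum fun j _ ↦ card_not_exists_half_fiberCard_sub_eq_intCast hn j (d j)
      _ = ∑ x : Fin (2 * n) → Fin n, (#(misalignedCups m d x) : ℝ) := by
          exact_mod_cast (sum_card_misalignedCups m d).symm
  rw [← mul_expect, Fintype.expect_eq_sum_div_card, Fintype.card_fun, Fintype.card_fin,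
    Fintype.card_fin, Nat.cast_pow, mul_div_assoc', le_div_iff₀ hN]
  linarith

theorem ncard_eq_card_misalignedCups (m : ℕ) (d : Fin n → ℝ) (x : Fin k → Fin n) :
    Set.ncard {j : Fin n | (j : ℕ) < m ∧
      ¬∃ z : ℤ, (1 / 2 : ℝ) * (Set.ncard {i | x i = j} : ℝ) - d j = z} =
      #(misalignedCups m d x) := by
  rw [← Set.ncard_coe_finset]
  congr 1
  ext j
  simp [misalignedCups, fiberCard_eq_ncard]

end MisalignedCups

theorem stmt_15_general {Ω : Type*} [MeasurableSpace Ω] (μ : Measure Ω)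
    (n m : ℕ) (hn : 2 ≤ n) (hmn : m ≤ n)
    (A : Fin (2 * n) → Ω → Fin n)
    (hindep : iIndepFun A μ)
    (hunif : ∀ i x, μ {ω | A i ω = x} = (n : ENNReal)⁻¹)
    (d : Fin n → ℝ) :
    μ {ω | (1 / 2 : ℝ) * (Set.ncard {j : Fin n | (j : ℕ) < m ∧
          ¬∃ z : ℤ, (1 / 2 : ℝ) * (Set.ncard {i : Fin (2 * n) | A i ω = j} : ℝ) - d j = (z : ℝ)}) <
        (m : ℝ) / 64} ≤ ENNReal.ofReal (Real.exp (-(m : ℝ) ^ 2 / (4096 * n))) := by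
  have : Nonempty (Fin n) := ⟨⟨0, by omega⟩⟩
  set F : (Fin (2 * n) → Fin n) → ℝ := fun x ↦ (1 / 2 : ℝ) * #(misalignedCups m d x)
  have hmean := le_expect_misalignedCups hn hmn d
  have hevent : {ω | (1 / 2 : ℝ) * (Set.ncard {j : Fin n | (j : ℕ) < m ∧
      ¬∃ z : ℤ, (1 / 2 : ℝ) * (Set.ncard {i : Fin (2 * n) | A i ω = j} : ℝ) - d j = (z : ℝ)}) <
      (m : ℝ) / 64} = {ω | (fun i ↦ A i ω) ∈ ({x | F x < m / 64} : Finset _)} := by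
    ext ω
    simp only [F, Set.mem_ofPred_eq, mem_filter, mem_univ, true_and, ncard_eq_card_misalignedCups]
  have htail := (hasBoundedDifferences_misalignedCups (k := 2 * n) m d).card_lt_div_le
    (s := m / 64) (by linarith)
  rw [hevent]
  refine (hindep.measure_tuple_mem_le (by simpa using hunif) _).trans
    (ENNReal.ofReal_le_ofReal ?_)
  simp only [Fintype.card_fin] at htail ⊢
  refine htail.trans (exp_le_exp.mpr ?_)
  have hgap : (m : ℝ) / 32 ≤ 𝔼 x, F x - m / 64 := by
    have : (0 : ℝ) ≤ m := m.cast_nonneg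
    linarith
  have hn0 : (0 : ℝ) < n := by positivity
  rw [neg_div, neg_div, neg_le_neg_iff, div_le_div_iff₀ (by positivity) (by positivity)]
  push_cast
  nlinarith [pow_le_pow_left₀ (by positivity) hgap 2]

/-- Concentration step for the fuzzing algorithm: `A 1, …, A (2n)` are independent uniform
choices of cups, `a j = (1/2)·#{i : A i = j}` is the water received by cup `j`, and
`F = (1/2)·#{j < m : a j − d j ∉ ℤ}`. Then `P(F < m/64) ≤ exp(−m²/(4096n))`. -/
theorem stmt_15 {Ω : Type*} [MeasurableSpace Ω] (μ : Measure Ω) [IsProbabilityMeasure μ]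
    (n m : ℕ) (hn : 2 ≤ n) (hm1 : 1 ≤ m) (hmn : m ≤ n)
    (A : Fin (2 * n) → Ω → Fin n) (hmeas : ∀ i, Measurable (A i))
    (hindep : iIndepFun A μ)
    (hunif : ∀ i x, μ {ω | A i ω = x} = (n : ENNReal)⁻¹)
    (d : Fin n → ℝ) :
    μ {ω | (1 / 2 : ℝ) * (Set.ncard {j : Fin n | (j : ℕ) < m ∧
          ¬∃ z : ℤ, (1 / 2 : ℝ) * (Set.ncard {i : Fin (2 * n) | A i ω = j} : ℝ) - d j = (z : ℝ)}) <
        (m : ℝ) / 64} ≤ ENNReal.ofReal (Real.exp (-(m : ℝ) ^ 2 / (4096 * n))) :=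
  stmt_15_general μ n m hn hmn A hindep hunif d
end
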